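/- arXiv:1102.0167 — 5 statements merged into one kernel-verified Lean document; each statement's English description precedes it below -/
import Mathlib

section
/- Let 1 < p < ∞ with Hölder conjugate q, and let A : V → V satisfy the homogeneity, Lipschitz and monotonicity conditions of a p-structure with constants C_𝔄, c_𝔄 (so A(λv) = λ^{p−1}A(v) for λ ≥ 0, |A(v₁)−A(v₂)| ≤ C_𝔄(|v₁|+|v₂|)^{p−2}|v₁−v₂| and ⟨A(v₁)−A(v₂) | v₁−v₂⟩ ≥ c_𝔄(|v₁|+|v₂|)^{p−2}|v₁−v₂|²). Let A₁, A₂ ∈ V and set B₁ := A(A₁), B₂ := A(A₂). Then there is a constant C' depending only on p, C_𝔄, c_𝔄 such that |A₁ − A₂|^p + |B₁ − B₂|^q ≤ C' (⟨A₁ − A₂ | B₁ − B₂⟩ + |A₁|^p + |B₁|^q) and also |A₁ − A₂|^p + |B₁ − B₂|^q ≤ C' (⟨A₁ − A₂ | B₁ − B₂⟩ + |A₂|^p + |B₂|^q). -/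
/-!
Write `d = ‖u - v‖` and `D = ‖u‖ + ‖v‖`. Either `d ≤ 4‖u‖`, so that `D^p ≲ ‖u‖^p`, or
`D ≤ 2d`, so that `D^p ≲ D^(p-2) d²`, which monotonicity bounds by `⟪u - v, A u - A v⟫`.
Both terms on the left are controlled by `D^p`: trivially `d^p ≤ D^p`, and Lipschitz
continuity gives `‖A u - A v‖ ≤ CA D^(p-1)`, whose `q`-th power is `CA^q D^p`.
The second inequality is the first one with `A₁` and `A₂` exchanged.
-/

open scoped RealInnerProductSpace

/-- A map `A : V → V` satisfies the homogeneity, Lipschitz and monotonicity conditions of a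
`p`-structure with constants `CA, cA > 0`.  Real exponents are interpreted via `Real.rpow`,
so that for `p < 2` the expressions `(|v₁|+|v₂|)^{p−2}|v₁−v₂|` and
`(|v₁|+|v₂|)^{p−2}|v₁−v₂|²` are `0` when `v₁ = v₂ = 0`. -/
structure IsPStructureMap {V : Type*} [NormedAddCommGroup V] [InnerProductSpace ℝ V]
    (p : ℝ) (A : V → V) (CA cA : ℝ) : Prop where
  homog : ∀ l : ℝ, 0 ≤ l → ∀ v : V, A (l • v) = l ^ (p - 1) • A v
  lipschitz : ∀ v₁ v₂ : V,
    ‖A v₁ - A v₂‖ ≤ CA * ((‖v₁‖ + ‖v₂‖) ^ (p - 2) * ‖v₁ - v₂‖)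
  monotone : ∀ v₁ v₂ : V,
    cA * ((‖v₁‖ + ‖v₂‖) ^ (p - 2) * ‖v₁ - v₂‖ ^ (2 : ℝ)) ≤ ⟪A v₁ - A v₂, v₁ - v₂⟫

lemma norm_add_norm_rpow_le {E : Type*} [SeminormedAddCommGroup E] {p : ℝ} (hp : 0 < p)
    (u v : E) :
    (‖u‖ + ‖v‖) ^ p ≤ 6 ^ p * ‖u‖ ^ p + 4 * ((‖u‖ + ‖v‖) ^ (p - 2) * ‖u - v‖ ^ (2 : ℝ)) := by
  set D := ‖u‖ + ‖v‖
  have hD : 0 ≤ D := by positivity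
  have hDle : D ≤ 2 * ‖u‖ + ‖u - v‖ := by linarith [norm_le_norm_add_norm_sub u v]
  have hS : 0 ≤ D ^ (p - 2) * ‖u - v‖ ^ (2 : ℝ) := by positivity
  rcases le_or_gt ‖u - v‖ (4 * ‖u‖) with hsmall | hlarge
  · have : D ^ p ≤ (6 * ‖u‖) ^ p := Real.rpow_le_rpow hD (by linarith) hp.le
    rw [Real.mul_rpow (by norm_num) (norm_nonneg u)] at this
    linarith
  · have hD2 : D ^ (2 : ℝ) ≤ 4 * ‖u - v‖ ^ (2 : ℝ) := by
      rw [Real.rpow_two, Real.rpow_two]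
      nlinarith [norm_nonneg u]
    calc D ^ p = D ^ (p - 2) * D ^ (2 : ℝ) := by
          rw [← Real.rpow_add' hD (by linarith)]; ring_nf
      _ ≤ D ^ (p - 2) * (4 * ‖u - v‖ ^ (2 : ℝ)) := by gcongr
      _ ≤ 6 ^ p * ‖u‖ ^ p + 4 * (D ^ (p - 2) * ‖u - v‖ ^ (2 : ℝ)) := by
          have : 0 ≤ (6 : ℝ) ^ p * ‖u‖ ^ p := by positivity
          linarith

namespace IsPStructureMap

variable {V : Type*} [NormedAddCommGroup V] [InnerProductSpace ℝ V]
  {p CA cA : ℝ} {A : V → V}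

lemma norm_sub_le_rpow (hA : IsPStructureMap p A CA cA) (hp : 1 < p) (hCA : 0 ≤ CA)
    (u v : V) : ‖A u - A v‖ ≤ CA * (‖u‖ + ‖v‖) ^ (p - 1) :=
  calc ‖A u - A v‖ ≤ CA * ((‖u‖ + ‖v‖) ^ (p - 2) * ‖u - v‖) := hA.lipschitz u v
    _ ≤ CA * ((‖u‖ + ‖v‖) ^ (p - 2) * (‖u‖ + ‖v‖)) := by gcongr; exact norm_sub_le u v
    _ = CA * (‖u‖ + ‖v‖) ^ (p - 1) := by
      rw [← Real.rpow_add_one' (by positivity) (by linarith)]; ring_nf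

lemma norm_sub_rpow_conjExponent_le (hA : IsPStructureMap p A CA cA) {q : ℝ}
    (hpq : p.HolderConjugate q) (hCA : 0 ≤ CA) (u v : V) :
    ‖A u - A v‖ ^ q ≤ CA ^ q * (‖u‖ + ‖v‖) ^ p :=
  calc ‖A u - A v‖ ^ q ≤ (CA * (‖u‖ + ‖v‖) ^ (p - 1)) ^ q :=
        Real.rpow_le_rpow (norm_nonneg _) (hA.norm_sub_le_rpow hpq.lt hCA u v) hpq.symm.nonneg
    _ = CA ^ q * (‖u‖ + ‖v‖) ^ p := by
        rw [Real.mul_rpow hCA (by positivity), ← Real.rpow_mul (by positivity),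
          hpq.sub_one_mul_conj]

lemma monotone' (hA : IsPStructureMap p A CA cA) (u v : V) :
    cA * ((‖u‖ + ‖v‖) ^ (p - 2) * ‖u - v‖ ^ (2 : ℝ)) ≤ ⟪u - v, A u - A v⟫ :=
  real_inner_comm (A u - A v) (u - v) ▸ hA.monotone u v

lemma norm_sub_rpow_add_norm_sub_rpow_le (hA : IsPStructureMap p A CA cA) {q : ℝ}
    (hpq : p.HolderConjugate q) (hCA : 0 ≤ CA) (hcA : 0 < cA) (u v : V) :
    ‖u - v‖ ^ p + ‖A u - A v‖ ^ q ≤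
      (1 + CA ^ q) * (6 ^ p + 4 / cA) * (⟪u - v, A u - A v⟫ + ‖u‖ ^ p + ‖A u‖ ^ q) := by
  set D := ‖u‖ + ‖v‖
  set S := D ^ (p - 2) * ‖u - v‖ ^ (2 : ℝ)
  set I := ⟪u - v, A u - A v⟫
  have hS : 0 ≤ S := by positivity
  have hSI : 4 * S ≤ 4 / cA * I := by
    rw [div_mul_eq_mul_div, le_div_iff₀ hcA]; linarith [hA.monotone' u v]
  have hI : 0 ≤ I := (mul_nonneg hcA.le hS).trans (hA.monotone' u v)
  have hd : ‖u - v‖ ^ p ≤ D ^ p :=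
    Real.rpow_le_rpow (norm_nonneg _) (norm_sub_le u v) hpq.nonneg
  have hDp := norm_add_norm_rpow_le hpq.pos u v
  have hB := hA.norm_sub_rpow_conjExponent_le hpq hCA u v
  have hP : 0 ≤ ‖u‖ ^ p := by positivity
  have hQ : 0 ≤ ‖A u‖ ^ q := by positivity
  have h6 : 0 ≤ (6 : ℝ) ^ p := by positivity
  have h4 : 0 ≤ 4 / cA := by positivity
  calc ‖u - v‖ ^ p + ‖A u - A v‖ ^ q ≤ (1 + CA ^ q) * D ^ p := by linarith
    _ ≤ (1 + CA ^ q) * (6 ^ p * ‖u‖ ^ p + 4 / cA * I) := by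
        gcongr; linarith
    _ ≤ (1 + CA ^ q) * ((6 ^ p + 4 / cA) * (I + ‖u‖ ^ p + ‖A u‖ ^ q)) := by
        gcongr
        nlinarith
    _ = _ := by ring

end IsPStructureMap

theorem p_structure_pointwise_inequalities_general
    {V : Type*} [NormedAddCommGroup V] [InnerProductSpace ℝ V]
    (p q : ℝ) (hp : 1 < p) (hpq : 1 / p + 1 / q = 1)
    (CA cA : ℝ) (hCA : 0 < CA) (hcA : 0 < cA) :
    ∃ C' : ℝ, ∀ A : V → V, IsPStructureMap p A CA cA → ∀ A₁ A₂ : V,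
      ‖A₁ - A₂‖ ^ p + ‖A A₁ - A A₂‖ ^ q ≤
        C' * (⟪A₁ - A₂, A A₁ - A A₂⟫ + ‖A₁‖ ^ p + ‖A A₁‖ ^ q) ∧
      ‖A₁ - A₂‖ ^ p + ‖A A₁ - A A₂‖ ^ q ≤
        C' * (⟪A₁ - A₂, A A₁ - A A₂⟫ + ‖A₂‖ ^ p + ‖A A₂‖ ^ q) := by
  have hconj : p.HolderConjugate q :=
    Real.holderConjugate_iff.mpr ⟨hp, by simpa only [one_div] using hpq⟩
  refine ⟨(1 + CA ^ q) * (6 ^ p + 4 / cA), fun A hA A₁ A₂ => ?_⟩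
  have key := hA.norm_sub_rpow_add_norm_sub_rpow_le hconj hCA.le hcA
  refine ⟨key A₁ A₂, ?_⟩
  have hswap := key A₂ A₁
  rwa [norm_sub_rev A₂, norm_sub_rev (A A₂), ← neg_sub A₁, ← neg_sub (A A₁), inner_neg_neg]
    at hswap

/-- Let `1 < p < ∞` with Hölder conjugate `q`, and let `A : V → V` satisfy
the conditions of a `p`-structure with constants `CA, cA`.  For `A₁, A₂ ∈ V` put
`B₁ := A A₁`, `B₂ := A A₂`.  Then there is a constant `C'` depending only on `p, CA, cA`
such that
`|A₁−A₂|^p + |B₁−B₂|^q ≤ C'(⟨A₁−A₂ | B₁−B₂⟩ + |A₁|^p + |B₁|^q)` and also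
`|A₁−A₂|^p + |B₁−B₂|^q ≤ C'(⟨A₁−A₂ | B₁−B₂⟩ + |A₂|^p + |B₂|^q)`. -/
theorem p_structure_pointwise_inequalities
    {V : Type*} [NormedAddCommGroup V] [InnerProductSpace ℝ V] [FiniteDimensional ℝ V]
    (p q : ℝ) (hp : 1 < p) (hpq : 1 / p + 1 / q = 1)
    (CA cA : ℝ) (hCA : 0 < CA) (hcA : 0 < cA) :
    ∃ C' : ℝ, ∀ A : V → V, IsPStructureMap p A CA cA → ∀ A₁ A₂ : V,
      ‖A₁ - A₂‖ ^ p + ‖A A₁ - A A₂‖ ^ q ≤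
        C' * (⟪A₁ - A₂, A A₁ - A A₂⟫ + ‖A₁‖ ^ p + ‖A A₁‖ ^ q) ∧
      ‖A₁ - A₂‖ ^ p + ‖A A₁ - A A₂‖ ^ q ≤
        C' * (⟪A₁ - A₂, A A₁ - A A₂⟫ + ‖A₂‖ ^ p + ‖A A₂‖ ^ q) :=
  p_structure_pointwise_inequalities_general p q hp hpq CA cA hCA hcA
end

section
/- There is a constant C (independent of f and t) such that for every f = (a,b) ∈ L^*(X) × L^*(X) and every t ≥ 0: ∫_X E^t dx ≤ C (∫_X [f_t] dx + ∫_X [f_t]^{1/p} [H]^{1/q} dx + ∫_X [f_t]^{1/q} [H]^{1/p} dx), and likewise ∫_X E_t dx ≤ C (∫_X [f^t] dx + ∫_X [f^t]^{1/p} [H]^{1/q} dx + ∫_X [f^t]^{1/q} [H]^{1/p} dx). -/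
open MeasureTheory ENNReal
open scoped RealInnerProductSpace

noncomputable section

variable {X : Type*} [MeasurableSpace X] {V : Type*}
  [NormedAddCommGroup V] [InnerProductSpace ℝ V] [FiniteDimensional ℝ V]
  [MeasurableSpace V] [BorelSpace V]

/-- Membership in `L^s(X, V)` for a real exponent `s`. -/
def MemLs (μ : Measure X) (s : ℝ) (f : X → V) : Prop :=
  MemLp f (ENNReal.ofReal s) μ

/-- Membership in `L^*(X) = ⋂_{1 ≤ s ≤ ∞} L^s(X, V)`. -/
def MemLstar (μ : Measure X) (f : X → V) : Prop :=
  MemLp f ⊤ μ ∧ ∀ s : ℝ, 1 ≤ s → MemLp f (ENNReal.ofReal s) μ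

/-- The orthogonal complement in `L²(X, V)` of a set `K` of functions, at the level of
functions: all `g ∈ L²` whose inner product with every member of `K` integrates to `0`. -/
def OrthCompl (μ : Measure X) (K : Set (X → V)) : Set (X → V) :=
  {g | MemLp g 2 μ ∧ ∀ f ∈ K, ∫ x, ⟪f x, g x⟫ ∂μ = 0}

/-- `K` is (the set of representatives of) a closed linear subspace of `L²(X, V)`. -/
structure IsClosedL2Subspace (μ : Measure X) (K : Set (X → V)) : Prop where
  mem_L2 : ∀ f ∈ K, MemLp f 2 μ
  zero_mem : (0 : X → V) ∈ K
  add_mem : ∀ ⦃f⦄, f ∈ K → ∀ ⦃g⦄, g ∈ K → f + g ∈ K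
  smul_mem : ∀ (c : ℝ) ⦃f⦄, f ∈ K → c • f ∈ K
  ae_mem : ∀ ⦃f⦄, f ∈ K → ∀ ⦃g : X → V⦄, f =ᵐ[μ] g → g ∈ K
  closed : ∀ ⦃f : X → V⦄, MemLp f 2 μ →
    (∀ ε : ℝ, 0 < ε → ∃ g ∈ K, eLpNorm (f - g) 2 μ < ENNReal.ofReal ε) → f ∈ K

/-- `LsCl μ K s` is the closure of `K ∩ L^s(X,V)` in the `L^s`-norm: the space `L^s_+(X)`
(for `K = L²_+`) resp. `L^s_-(X)` (for `K = L²_-`) of the paper. -/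
def LsCl (μ : Measure X) (K : Set (X → V)) (s : ℝ) : Set (X → V) :=
  {f | MemLs μ s f ∧ ∀ ε : ℝ, 0 < ε → ∃ g ∈ K, MemLs μ s g ∧
        eLpNorm (f - g) (ENNReal.ofReal s) μ < ENNReal.ofReal ε}

/-- The orthogonal projections `Π₊` onto `K` and `Π₋ = I - Π₊` are bounded in the `L^s`-norm:
whenever `ω ∈ L² ∩ L^s` is decomposed as `ω = α + (ω - α)` with `α ∈ K` and
`ω - α ⟂ K`, both pieces obey an `L^s` bound. -/
def ProjBounded (μ : Measure X) (K : Set (X → V)) (s : ℝ) : Prop :=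
  ∃ M : ℝ, ∀ ω α : X → V, MemLp ω 2 μ → MemLs μ s ω → α ∈ K →
    (ω - α) ∈ OrthCompl μ K →
    eLpNorm α (ENNReal.ofReal s) μ ≤ ENNReal.ofReal M * eLpNorm ω (ENNReal.ofReal s) μ ∧
    eLpNorm (ω - α) (ENNReal.ofReal s) μ ≤ ENNReal.ofReal M * eLpNorm ω (ENNReal.ofReal s) μ

/-- `A : X × V → V` is a `p`-structure: Carathéodory regular, `(p−1)`-homogeneous,
Lipschitz and monotone (with the rpow convention for the degenerate case `v₁ = v₂ = 0`
when `p < 2`). -/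
structure IsPStructure (μ : Measure X) (p : ℝ) (A : X → V → V) (CA cA : ℝ) : Prop where
  measurable_x : ∀ v : V, Measurable fun x => A x v
  continuous_v : ∀ᵐ x ∂μ, Continuous fun v => A x v
  homog : ∀ᵐ x ∂μ, ∀ l : ℝ, 0 ≤ l → ∀ v : V, A x (l • v) = l ^ (p - 1) • A x v
  lipschitz : ∀ᵐ x ∂μ, ∀ v₁ v₂ : V,
    ‖A x v₁ - A x v₂‖ ≤ CA * ((‖v₁‖ + ‖v₂‖) ^ (p - 2) * ‖v₁ - v₂‖)
  monotone : ∀ᵐ x ∂μ, ∀ v₁ v₂ : V,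
    cA * ((‖v₁‖ + ‖v₂‖) ^ (p - 2) * ‖v₁ - v₂‖ ^ (2 : ℝ)) ≤ ⟪A x v₁ - A x v₂, v₁ - v₂⟫

/-- `(α, β) = ℜf` solves the `(p,q)`-system for the data `f = (a, b)`:
`α ∈ L^p_+(X)`, `β ∈ L^q_-(X)` and `𝔄(x, a+α) = b+β` a.e. -/
def Solves (μ : Measure X) (K : Set (X → V)) (A : X → V → V) (p q : ℝ)
    (a b α β : X → V) : Prop :=
  α ∈ LsCl μ K p ∧ β ∈ LsCl μ (OrthCompl μ K) q ∧
    (fun x => A x (a x + α x)) =ᵐ[μ] fun x => b x + β x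

/-- The bracket `[f] = |a|^p + |b|^q` of a pair `f = (a, b)`. -/
def br (p q : ℝ) (a b : X → V) (x : X) : ℝ :=
  ‖a x‖ ^ p + ‖b x‖ ^ q

/-- The operator `ℜ` is of weak `λ`-type: for data `f = (a,b) ∈ L^* × L^*`, the solution
`ℜf = (α,β)` lies in `L^{λp} × L^{λq}` and satisfies
`meas{x : [ℜf(x)] > t} ≤ C t^{−λ} ∫ [f]^λ` for all `t > 0`. -/
def WeakType (μ : Measure X) (K : Set (X → V)) (A : X → V → V) (p q lam : ℝ) : Prop :=
  ∃ C : ℝ, ∀ a b α β : X → V, MemLstar μ a → MemLstar μ b →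
    Solves μ K A p q a b α β →
    MemLs μ (lam * p) α ∧ MemLs μ (lam * q) β ∧
    ∀ t : ℝ, 0 < t →
      μ {x | t < br p q α β x} ≤
        ENNReal.ofReal (C * t ^ (-lam) * ∫ x, br p q a b x ^ lam ∂μ)

/-- The upper Marcinkiewicz truncation `f^t` of a function (component of a pair `f`),
relative to the level set `{[f] > t}`. -/
def upTr (p q : ℝ) (a b : X → V) (t : ℝ) (g : X → V) : X → V :=
  Set.indicator {x | t < br p q a b x} g

/-- The lower Marcinkiewicz truncation `f_t` of a function (component of a pair `f`),
relative to the level set `{[f] ≤ t}`. -/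
def loTr (p q : ℝ) (a b : X → V) (t : ℝ) (g : X → V) : X → V :=
  Set.indicator {x | br p q a b x ≤ t} g

/-! Write `H = f + ℜf` and `H' = f' + ℜf'` for two data `f, f'`; with `f' = f^t` or `f' = f_t`
the difference `f - f'` is `f_t` resp. `f^t`. The components `α - α' ∈ L^p_+` and
`β - β' ∈ L^q_-` are orthogonal (approximate both by elements of `L²_±` and use Hölder), so the
energy `⟪H - H', 𝔄H - 𝔄H'⟫` integrates like
`⟪a - a', 𝔄H - 𝔄H'⟫ + ⟪H - H', b - b'⟫ - ⟪a - a', b - b'⟫`. Pointwise, monotonicity bounds the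
energy below by `c_𝔄 S^(p-2) |H - H'|²` with `S = |H| + |H'|`, and the Lipschitz bound together
with Young's inequality with `ε` absorbs each of the three terms into a quarter of this, up to
multiples of `[f - f']` and `[f - f']^(1/p) [H]^(1/q)`. This uses `p ≥ 2`, which follows from
`q ≤ p`. -/

theorem Real.HolderConjugate.young_inequality_eps {p q : ℝ} (hpq : p.HolderConjugate q)
    {δ : ℝ} (hδ : 0 < δ) :
    ∃ C, 0 ≤ C ∧ ∀ x y : ℝ, 0 ≤ x → 0 ≤ y → x * y ≤ δ * x ^ p + C * y ^ q := by
  have hp := hpq.pos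
  have hq := hpq.symm.pos
  obtain ⟨ε, hε, hεp⟩ : ∃ ε > 0, ε ^ p = δ * p :=
    ⟨(δ * p) ^ p⁻¹, by positivity, Real.rpow_inv_rpow (by positivity) hpq.ne_zero⟩
  refine ⟨(ε ^ q)⁻¹ / q, by positivity, fun x y hx hy => ?_⟩
  have young := Real.young_inequality_of_nonneg (mul_nonneg hε.le hx) (div_nonneg hy hε.le) hpq
  rw [Real.mul_rpow hε.le hx, Real.div_rpow hy hε.le, hεp] at young
  calc x * y = (ε * x) * (y / ε) := by field_simp
    _ ≤ _ := young
    _ = _ := by field_simp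

theorem Real.rpow_le_rpow_sub_two_mul_sq {p D S : ℝ} (hp : 2 ≤ p) (hD : 0 ≤ D) (hDS : D ≤ S) :
    D ^ p ≤ S ^ (p - 2) * D ^ 2 :=
  calc D ^ p = D ^ (p - 2) * D ^ 2 := by
        rw [← Real.rpow_add_natCast' hD (by norm_num; linarith)]; norm_num
    _ ≤ S ^ (p - 2) * D ^ 2 := by gcongr

theorem exists_mul_rpow_sub_two_mul_le {p δ : ℝ} (hp : 2 ≤ p) (hδ : 0 < δ) :
    ∃ C, 0 ≤ C ∧ ∀ m h D S : ℝ, 0 ≤ m → 0 ≤ h → 0 ≤ D → D ≤ S → S ≤ 2 * h + D →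
      m * (S ^ (p - 2) * D) ≤ δ * (S ^ (p - 2) * D ^ 2) + C * (m * h ^ (p - 1) + m ^ p) := by
  have hconj := (Real.HolderConjugate.conjExponent (by linarith : 1 < p)).symm
  obtain ⟨C₀, hC₀, young⟩ := hconj.young_inequality_eps (δ := δ / 2 ^ (p - 2)) (by positivity)
  refine ⟨2 * 4 ^ (p - 2) + 2 ^ (p - 2) * C₀, by positivity, fun m h D S hm hh hD hDS hS => ?_⟩
  have hS0 : 0 ≤ S := hD.trans hDS
  have hmh : 0 ≤ m * h ^ (p - 1) := by positivity
  have hmp : 0 ≤ m ^ p := by positivity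
  have h4 : (0:ℝ) ≤ 2 * 4 ^ (p - 2) := by positivity
  have h2 : (0:ℝ) < 2 ^ (p - 2) := by positivity
  rcases le_or_gt D (2 * h) with hDh | hDh
  · have key : S ^ (p - 2) * D ≤ 2 * 4 ^ (p - 2) * h ^ (p - 1) :=
      calc S ^ (p - 2) * D ≤ (4 * h) ^ (p - 2) * (2 * h) := by
            gcongr; linarith
        _ = 2 * 4 ^ (p - 2) * h ^ (p - 1) := by
            rw [Real.mul_rpow (by norm_num) hh, show p - 1 = (p - 2) + 1 by ring,
              Real.rpow_add_one' hh (by linarith)]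
            ring
    have hSD : 0 ≤ δ * (S ^ (p - 2) * D ^ 2) := by positivity
    calc m * (S ^ (p - 2) * D) ≤ 2 * 4 ^ (p - 2) * (m * h ^ (p - 1)) := by
          linarith [mul_le_mul_of_nonneg_left key hm]
      _ ≤ _ := by linarith [hSD, mul_nonneg h4 hmp, mul_nonneg (mul_nonneg h2.le hC₀) hmh,
          mul_nonneg (mul_nonneg h2.le hC₀) hmp]
  · have key : S ^ (p - 2) * D ≤ 2 ^ (p - 2) * D ^ (p - 1) :=
      calc S ^ (p - 2) * D ≤ (2 * D) ^ (p - 2) * D := by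
            gcongr; linarith
        _ = 2 ^ (p - 2) * D ^ (p - 1) := by
            rw [Real.mul_rpow (by norm_num) hD, show p - 1 = (p - 2) + 1 by ring,
              Real.rpow_add_one' hD (by linarith)]
            ring
    have hy := young (D ^ (p - 1)) m (by positivity) hm
    rw [← Real.rpow_mul hD, Real.conjExponent, mul_div_cancel₀ _ (by linarith)] at hy
    calc m * (S ^ (p - 2) * D) ≤ 2 ^ (p - 2) * (D ^ (p - 1) * m) := by
          linarith [mul_le_mul_of_nonneg_left key hm]
      _ ≤ 2 ^ (p - 2) * (δ / 2 ^ (p - 2) * D ^ p + C₀ * m ^ p) := by gcongr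
      _ = δ * D ^ p + 2 ^ (p - 2) * C₀ * m ^ p := by field_simp
      _ ≤ _ := by
          linarith [mul_le_mul_of_nonneg_left (Real.rpow_le_rpow_sub_two_mul_sq hp hD hDS) hδ.le,
            mul_nonneg h4 hmp, mul_nonneg h4 hmh, mul_nonneg (mul_nonneg h2.le hC₀) hmh]

section Pointwise

variable {E : Type*} [NormedAddCommGroup E] [InnerProductSpace ℝ E]

theorem exists_inner_sub_le_of_monotone_of_lipschitz {p q CA cA : ℝ} (hp : 2 ≤ p)
    (hpq : p.HolderConjugate q) (hCA : 0 < CA) (hcA : 0 < cA) :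
    ∃ C, 0 ≤ C ∧ ∀ H H' K K' da db dα dβ : E, H - H' = da + dα → K - K' = db + dβ →
      cA * ((‖H‖ + ‖H'‖) ^ (p - 2) * ‖H - H'‖ ^ 2) ≤ ⟪K - K', H - H'⟫ →
      ‖K - K'‖ ≤ CA * ((‖H‖ + ‖H'‖) ^ (p - 2) * ‖H - H'‖) →
      ⟪H - H', K - K'⟫ ≤ C * ((‖da‖ ^ p + ‖db‖ ^ q)
        + (‖da‖ ^ p + ‖db‖ ^ q) ^ (1 / p) * (‖H‖ ^ p + ‖K‖ ^ q) ^ (1 / q)) + 2 * ⟪dα, dβ⟫ := by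
  obtain ⟨C₁, hC₁, h₁⟩ := exists_mul_rpow_sub_two_mul_le hp (δ := cA / (4 * CA)) (by positivity)
  obtain ⟨C₂, hC₂, h₂⟩ := hpq.young_inequality_eps (δ := cA / 4) (by positivity)
  refine ⟨2 * (CA * C₁ + C₂ + 1), by positivity, ?_⟩
  intro H H' K K' da db dα dβ hu hv hmono hlip
  set S := ‖H‖ + ‖H'‖
  set D := ‖H - H'‖
  set F := ‖da‖ ^ p + ‖db‖ ^ q
  set G := ‖H‖ ^ p + ‖K‖ ^ q
  have hDS : D ≤ S := norm_sub_le _ _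
  have hS : S ≤ 2 * ‖H‖ + D := by
    have := norm_sub_norm_le H' H
    rw [norm_sub_rev] at this
    linarith
  have hdaF : ‖da‖ ^ p ≤ F := le_add_of_nonneg_right (by positivity)
  have hdbF : ‖db‖ ^ q ≤ F := le_add_of_nonneg_left (by positivity)
  have hsplit : ⟪H - H', K - K'⟫ = ⟪da, K - K'⟫ + ⟪H - H', db⟫ - ⟪da, db⟫ + ⟪dα, dβ⟫ := by
    rw [hu, hv]
    simp only [inner_add_left, inner_add_right]
    ring
  have bound₁ : ⟪da, K - K'⟫ ≤
      cA / 4 * (S ^ (p - 2) * D ^ 2) + CA * C₁ * (‖da‖ * ‖H‖ ^ (p - 1) + ‖da‖ ^ p) :=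
    calc ⟪da, K - K'⟫ ≤ ‖da‖ * (CA * (S ^ (p - 2) * D)) :=
          (real_inner_le_norm _ _).trans (by gcongr)
      _ = CA * (‖da‖ * (S ^ (p - 2) * D)) := by ring
      _ ≤ CA * (cA / (4 * CA) * (S ^ (p - 2) * D ^ 2)
            + C₁ * (‖da‖ * ‖H‖ ^ (p - 1) + ‖da‖ ^ p)) := by
          gcongr
          exact h₁ _ _ _ _ (norm_nonneg _) (norm_nonneg _) (norm_nonneg _) hDS hS
      _ = _ := by field_simp
  have bound₂ : ⟪H - H', db⟫ ≤ cA / 4 * (S ^ (p - 2) * D ^ 2) + C₂ * ‖db‖ ^ q :=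
    calc ⟪H - H', db⟫ ≤ D * ‖db‖ := real_inner_le_norm _ _
      _ ≤ cA / 4 * D ^ p + C₂ * ‖db‖ ^ q := h₂ _ _ (norm_nonneg _) (norm_nonneg _)
      _ ≤ _ := by
          gcongr
          exact Real.rpow_le_rpow_sub_two_mul_sq hp (norm_nonneg _) hDS
  have bound₃ : -⟪da, db⟫ ≤ F :=
    calc -⟪da, db⟫ ≤ ‖da‖ * ‖db‖ := (neg_le_abs _).trans (abs_real_inner_le_norm _ _)
      _ ≤ ‖da‖ ^ p / p + ‖db‖ ^ q / q :=
          Real.young_inequality_of_nonneg (norm_nonneg _) (norm_nonneg _) hpq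
      _ ≤ ‖da‖ ^ p + ‖db‖ ^ q := by
          gcongr
          · exact div_le_self (by positivity) hpq.lt.le
          · exact div_le_self (by positivity) hpq.symm.lt.le
  have bound₄ : ‖da‖ * ‖H‖ ^ (p - 1) ≤ F ^ (1 / p) * G ^ (1 / q) := by
    rw [one_div, one_div]
    gcongr
    · exact (Real.le_rpow_inv_iff_of_pos (norm_nonneg _) (by positivity) hpq.pos).2 hdaF
    · refine (Real.le_rpow_inv_iff_of_pos (by positivity) (by positivity) hpq.symm.pos).2 ?_
      rw [← Real.rpow_mul (norm_nonneg _), hpq.sub_one_mul_conj]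
      exact le_add_of_nonneg_right (by positivity)
  have hmono' : cA * (S ^ (p - 2) * D ^ 2) ≤ ⟪H - H', K - K'⟫ := by
    rwa [real_inner_comm]
  have hB : 0 ≤ F ^ (1 / p) * G ^ (1 / q) := by positivity
  have hCC : 0 ≤ CA * C₁ := by positivity
  linarith [mul_le_mul_of_nonneg_left bound₄ hCC, mul_le_mul_of_nonneg_left hdaF hCC,
    mul_le_mul_of_nonneg_left hdbF hC₂, mul_nonneg hC₂ hB]

end Pointwise

section Truncation

variable {α E : Type*} [NormedAddCommGroup E] {p q t : ℝ} {a b g : α → E}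

theorem br_nonneg (x : α) : 0 ≤ br p q a b x := by
  unfold br
  positivity

theorem loTr_eq_sub_upTr : loTr p q a b t g = g - upTr p q a b t g := by
  rw [loTr, upTr, ← Set.indicator_compl]
  congr 1
  ext x
  simp

theorem upTr_eq_sub_loTr : upTr p q a b t g = g - loTr p q a b t g := by
  rw [loTr_eq_sub_upTr]
  abel

variable [MeasurableSpace α] {μ : Measure α}

theorem integrable_br (hp : 0 < p) (hq : 0 < q) (ha : MemLp a (.ofReal p) μ)
    (hb : MemLp b (.ofReal q) μ) : Integrable (br p q a b) μ := by
  have hap := ha.integrable_norm_rpow (by simpa using hp) ENNReal.ofReal_ne_top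
  have hbq := hb.integrable_norm_rpow (by simpa using hq) ENNReal.ofReal_ne_top
  rw [ENNReal.toReal_ofReal hp.le] at hap
  rw [ENNReal.toReal_ofReal hq.le] at hbq
  exact hap.add hbq

theorem MeasureTheory.MemLp.upTr {s : ℝ≥0∞} (hg : MemLp g s μ) (ha : AEStronglyMeasurable a μ)
    (hb : AEStronglyMeasurable b μ) : MemLp (upTr p q a b t g) s μ :=
  hg.of_le (hg.1.indicator₀ <| nullMeasurableSet_lt aemeasurable_const
      ((ha.norm.aemeasurable.pow_const p).add (hb.norm.aemeasurable.pow_const q)))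
    (ae_of_all _ fun _ => norm_indicator_le_norm_self _ _)

end Truncation

theorem MeasureTheory.Integrable.rpow_mul_rpow {α : Type*} [MeasurableSpace α] {μ : Measure α}
    {f g : α → ℝ} (hf : Integrable f μ) (hg : Integrable g μ) (hf0 : ∀ x, 0 ≤ f x)
    (hg0 : ∀ x, 0 ≤ g x) {r s : ℝ} (hr : 0 ≤ r) (hs : 0 ≤ s) (hrs : r + s = 1) :
    Integrable (fun x => f x ^ r * g x ^ s) μ := by
  refine (hf.add hg).mono'
    ((hf.1.aemeasurable.pow_const r).mul (hg.1.aemeasurable.pow_const s)).aestronglyMeasurable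
    (ae_of_all _ fun x => ?_)
  have hfx := hf0 x
  have hgx := hg0 x
  rw [Real.norm_of_nonneg (by positivity)]
  calc f x ^ r * g x ^ s ≤ r * f x + s * g x :=
        Real.geom_mean_le_arith_mean2_weighted hr hs hfx hgx hrs
    _ ≤ f x + g x := by nlinarith

section Orthogonality

variable {α E : Type*} [MeasurableSpace α] {μ : Measure α}
  [NormedAddCommGroup E] [InnerProductSpace ℝ E] {p q : ℝ} {f g : α → E}

theorem integrable_inner_of_memLp (hpq : p.HolderConjugate q) (hf : MemLp f (.ofReal p) μ)
    (hg : MemLp g (.ofReal q) μ) : Integrable (fun x => ⟪f x, g x⟫) μ :=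
  have := hpq.ennrealOfReal
  memLp_one_iff_integrable.1 <| hf.of_bilin (fun u v => ⟪u, v⟫) 1 hg (hf.1.inner hg.1)
    (ae_of_all _ fun x => by simpa using nnnorm_inner_le_nnnorm (f x) (g x))

theorem enorm_integral_inner_le (hpq : p.HolderConjugate q) (hf : AEStronglyMeasurable f μ)
    (hg : AEStronglyMeasurable g μ) :
    ‖∫ x, ⟪f x, g x⟫ ∂μ‖ₑ ≤ eLpNorm f (.ofReal p) μ * eLpNorm g (.ofReal q) μ := by
  have := hpq.ennrealOfReal
  refine (enorm_integral_le_lintegral_enorm _).trans ?_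
  rw [← eLpNorm_one_eq_lintegral_enorm]
  simpa using eLpNorm_le_eLpNorm_mul_eLpNorm_of_nnnorm hf hg (fun u v => ⟪u, v⟫) 1
    (ae_of_all _ fun x => by simpa using nnnorm_inner_le_nnnorm (f x) (g x))

theorem integral_inner_eq_zero_of_approx (hpq : p.HolderConjugate q)
    (hf : MemLp f (.ofReal p) μ) (hg : MemLp g (.ofReal q) μ)
    (happrox : ∀ ε : ℝ, 0 < ε → ∃ f', MemLp f' (.ofReal p) μ ∧
      eLpNorm (f - f') (.ofReal p) μ < .ofReal ε ∧ ∫ x, ⟪f' x, g x⟫ ∂μ = 0) :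
    ∫ x, ⟪f x, g x⟫ ∂μ = 0 := by
  have hsmall : ∀ ε : ℝ, 0 < ε →
      ‖∫ x, ⟪f x, g x⟫ ∂μ‖ₑ ≤ .ofReal ε * eLpNorm g (.ofReal q) μ := by
    intro ε hε
    obtain ⟨f', hf', hff', horth⟩ := happrox ε hε
    have hsub : ∫ x, ⟪(f - f') x, g x⟫ ∂μ = ∫ x, ⟪f x, g x⟫ ∂μ := by
      simp_rw [Pi.sub_apply, inner_sub_left]
      rw [integral_sub (integrable_inner_of_memLp hpq hf hg)
        (integrable_inner_of_memLp hpq hf' hg), horth, sub_zero]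
    rw [← hsub]
    exact (enorm_integral_inner_le hpq (hf.sub hf').1 hg.1).trans (by gcongr)
  have hlim : Filter.Tendsto (fun ε : ℝ => ENNReal.ofReal ε * eLpNorm g (.ofReal q) μ)
      (nhdsWithin 0 (Set.Ioi 0)) (nhds 0) := by
    have := ENNReal.Tendsto.mul_const (ENNReal.tendsto_ofReal (Filter.tendsto_id (x := nhds 0)))
      (Or.inr hg.2.ne) (b := eLpNorm g (.ofReal q) μ)
    simpa using this.mono_left nhdsWithin_le_nhds
  exact enorm_eq_zero.1 <| le_antisymm
    (ge_of_tendsto hlim (eventually_nhdsWithin_of_forall hsmall)) bot_le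

variable {K : Set (α → E)}

theorem integral_inner_eq_zero_of_mem_LsCl (hpq : p.HolderConjugate q) (hf : f ∈ LsCl μ K p)
    (hg : g ∈ LsCl μ (OrthCompl μ K) q) : ∫ x, ⟪f x, g x⟫ ∂μ = 0 := by
  have horth : ∀ f' ∈ K, MemLp f' (.ofReal p) μ → ∫ x, ⟪f' x, g x⟫ ∂μ = 0 := by
    intro f' hf'K hf'
    have := integral_inner_eq_zero_of_approx hpq.symm hg.1 hf' fun ε hε => by
      obtain ⟨g', hg'K, hg', hgg'⟩ := hg.2 ε hε
      refine ⟨g', hg', hgg', ?_⟩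
      simpa only [real_inner_comm] using hg'K.2 f' hf'K
    simpa only [real_inner_comm] using this
  exact integral_inner_eq_zero_of_approx hpq hf.1 hg.1 fun ε hε => by
    obtain ⟨f', hf'K, hf', hff'⟩ := hf.2 ε hε
    exact ⟨f', hf', hff', horth f' hf'K hf'⟩

theorem integral_inner_sub_sub_eq_zero (hpq : p.HolderConjugate q) {α₁ α₂ β₁ β₂ : α → E}
    (hα₁ : α₁ ∈ LsCl μ K p) (hα₂ : α₂ ∈ LsCl μ K p) (hβ₁ : β₁ ∈ LsCl μ (OrthCompl μ K) q)
    (hβ₂ : β₂ ∈ LsCl μ (OrthCompl μ K) q) :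
    ∫ x, ⟪α₁ x - α₂ x, β₁ x - β₂ x⟫ ∂μ = 0 := by
  have hint : ∀ f ∈ LsCl μ K p, Integrable (fun x => ⟪f x, β₁ x - β₂ x⟫) μ :=
    fun f hf => integrable_inner_of_memLp hpq hf.1 (hβ₁.1.sub hβ₂.1)
  have hzero : ∀ f ∈ LsCl μ K p, ∫ x, ⟪f x, β₁ x - β₂ x⟫ ∂μ = 0 := fun f hf => by
    simp_rw [inner_sub_right]
    rw [integral_sub (integrable_inner_of_memLp hpq hf.1 hβ₁.1)
      (integrable_inner_of_memLp hpq hf.1 hβ₂.1), integral_inner_eq_zero_of_mem_LsCl hpq hf hβ₁,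
      integral_inner_eq_zero_of_mem_LsCl hpq hf hβ₂, sub_zero]
  simp_rw [inner_sub_left _ _ (β₁ _ - β₂ _)]
  rw [integral_sub (hint α₁ hα₁) (hint α₂ hα₂), hzero α₁ hα₁, hzero α₂ hα₂, sub_zero]

theorem exists_integral_inner_sub_le [MeasurableSpace E] {A : α → E → E} {CA cA : ℝ} (hp : 2 ≤ p)
    (hpq : p.HolderConjugate q) (hCA : 0 < CA) (hcA : 0 < cA) (hA : IsPStructure μ p A CA cA) :
    ∃ C : ℝ, ∀ a b α₁ β₁ a' b' α₂ β₂ : α → E,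
      MemLp a (.ofReal p) μ → MemLp b (.ofReal q) μ →
      MemLp a' (.ofReal p) μ → MemLp b' (.ofReal q) μ →
      Solves μ K A p q a b α₁ β₁ → Solves μ K A p q a' b' α₂ β₂ →
      ∫ x, ⟪(a x + α₁ x) - (a' x + α₂ x), (b x + β₁ x) - (b' x + β₂ x)⟫ ∂μ ≤
        C * (∫ x, br p q (a - a') (b - b') x ∂μ
          + ∫ x, br p q (a - a') (b - b') x ^ (1 / p) *
              br p q (fun y => a y + α₁ y) (fun y => b y + β₁ y) x ^ (1 / q) ∂μ
          + ∫ x, br p q (a - a') (b - b') x ^ (1 / q) *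
              br p q (fun y => a y + α₁ y) (fun y => b y + β₁ y) x ^ (1 / p) ∂μ) := by
  obtain ⟨C, hC0, hC⟩ := exists_inner_sub_le_of_monotone_of_lipschitz (E := E) hp hpq hCA hcA
  refine ⟨C, fun a b α₁ β₁ a' b' α₂ β₂ ha hb ha' hb' ⟨hα₁, hβ₁, hsol₁⟩ ⟨hα₂, hβ₂, hsol₂⟩ => ?_⟩
  set F := br p q (a - a') (b - b')
  set G := br p q (fun y => a y + α₁ y) (fun y => b y + β₁ y)
  have hF : Integrable F μ := integrable_br hpq.pos hpq.symm.pos (ha.sub ha') (hb.sub hb')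
  have hFG : Integrable (fun x => F x ^ (1 / p) * G x ^ (1 / q)) μ :=
    hF.rpow_mul_rpow (integrable_br hpq.pos hpq.symm.pos (ha.add hα₁.1) (hb.add hβ₁.1))
      br_nonneg br_nonneg hpq.one_div_nonneg hpq.symm.one_div_nonneg
      (by simpa only [one_div] using hpq.inv_add_inv_eq_one)
  have hR : Integrable (fun x => C * (F x + F x ^ (1 / p) * G x ^ (1 / q))) μ :=
    (hF.add hFG).const_mul C
  have hW : Integrable (fun x => 2 * ⟪α₁ x - α₂ x, β₁ x - β₂ x⟫) μ :=
    (integrable_inner_of_memLp hpq (hα₁.1.sub hα₂.1) (hβ₁.1.sub hβ₂.1)).const_mul 2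
  have hE : Integrable
      (fun x => ⟪(a x + α₁ x) - (a' x + α₂ x), (b x + β₁ x) - (b' x + β₂ x)⟫) μ :=
    integrable_inner_of_memLp hpq ((ha.add hα₁.1).sub (ha'.add hα₂.1))
      ((hb.add hβ₁.1).sub (hb'.add hβ₂.1))
  have hpt : ∀ᵐ x ∂μ, ⟪(a x + α₁ x) - (a' x + α₂ x), (b x + β₁ x) - (b' x + β₂ x)⟫ ≤
      C * (F x + F x ^ (1 / p) * G x ^ (1 / q)) + 2 * ⟪α₁ x - α₂ x, β₁ x - β₂ x⟫ := by
    filter_upwards [hA.monotone, hA.lipschitz, hsol₁, hsol₂] with x hmono hlip hx₁ hx₂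
    have hmono := hmono (a x + α₁ x) (a' x + α₂ x)
    have hlip := hlip (a x + α₁ x) (a' x + α₂ x)
    rw [hx₁, hx₂, Real.rpow_two] at hmono
    rw [hx₁, hx₂] at hlip
    exact hC _ _ _ _ (a x - a' x) (b x - b' x) _ _ (by abel) (by abel) hmono hlip
  calc _ ≤ ∫ x, (C * (F x + F x ^ (1 / p) * G x ^ (1 / q))
          + 2 * ⟪α₁ x - α₂ x, β₁ x - β₂ x⟫) ∂μ := integral_mono_ae hE (hR.add hW) hpt
    _ = C * (∫ x, F x ∂μ + ∫ x, F x ^ (1 / p) * G x ^ (1 / q) ∂μ) := by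
        rw [integral_add hR hW, integral_const_mul, integral_const_mul, integral_add hF hFG,
          integral_inner_sub_sub_eq_zero hpq hα₁ hα₂ hβ₁ hβ₂, mul_zero, add_zero]
    _ ≤ _ := by
        refine mul_le_mul_of_nonneg_left (le_add_of_nonneg_right (integral_nonneg fun x => ?_)) hC0
        exact mul_nonneg (Real.rpow_nonneg (br_nonneg x) _) (Real.rpow_nonneg (br_nonneg x) _)

end Orthogonality

theorem energy_estimates_general
    (μ : Measure X)
    (K : Set (X → V))
    (p q : ℝ) (hp : 1 < p) (hpq : 1 / p + 1 / q = 1)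
    (hqp : q ≤ p)
    (A : X → V → V) (CA cA : ℝ) (hCA : 0 < CA) (hcA : 0 < cA)
    (hA : IsPStructure μ p A CA cA) :
    ∃ C : ℝ, ∀ a b α β : X → V, MemLstar μ a → MemLstar μ b →
      Solves μ K A p q a b α β →
      ∀ t : ℝ, 0 ≤ t →
      ∀ αu βu αl βl : X → V,
        Solves μ K A p q (upTr p q a b t a) (upTr p q a b t b) αu βu →
        Solves μ K A p q (loTr p q a b t a) (loTr p q a b t b) αl βl →
        (∫ x, ⟪(a x + α x) - (upTr p q a b t a x + αu x),
               (b x + β x) - (upTr p q a b t b x + βu x)⟫ ∂μ ≤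
          C * (∫ x, br p q (loTr p q a b t a) (loTr p q a b t b) x ∂μ
             + ∫ x, br p q (loTr p q a b t a) (loTr p q a b t b) x ^ (1 / p) *
                 br p q (fun y => a y + α y) (fun y => b y + β y) x ^ (1 / q) ∂μ
             + ∫ x, br p q (loTr p q a b t a) (loTr p q a b t b) x ^ (1 / q) *
                 br p q (fun y => a y + α y) (fun y => b y + β y) x ^ (1 / p) ∂μ)) ∧
        (∫ x, ⟪(a x + α x) - (loTr p q a b t a x + αl x),
               (b x + β x) - (loTr p q a b t b x + βl x)⟫ ∂μ ≤
          C * (∫ x, br p q (upTr p q a b t a) (upTr p q a b t b) x ∂μ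
             + ∫ x, br p q (upTr p q a b t a) (upTr p q a b t b) x ^ (1 / p) *
                 br p q (fun y => a y + α y) (fun y => b y + β y) x ^ (1 / q) ∂μ
             + ∫ x, br p q (upTr p q a b t a) (upTr p q a b t b) x ^ (1 / q) *
                 br p q (fun y => a y + α y) (fun y => b y + β y) x ^ (1 / p) ∂μ)) := by
  have hconj : p.HolderConjugate q :=
    Real.holderConjugate_iff.2 ⟨hp, by simpa only [one_div] using hpq⟩
  have hp2 : 2 ≤ p := by
    have := one_div_le_one_div_of_le hconj.symm.pos hqp
    exact (one_div_le_one_div hconj.pos two_pos).1 (by linarith)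
  obtain ⟨C, hC⟩ := exists_integral_inner_sub_le (K := K) hp2 hconj hCA hcA hA
  refine ⟨C, fun a b α β ha hb hsol t _ αu βu αl βl hsolu hsoll => ?_⟩
  have hap := ha.2 p hp.le
  have hbq := hb.2 q hconj.symm.lt.le
  have hau : MemLp (upTr p q a b t a) (.ofReal p) μ := hap.upTr hap.1 hbq.1
  have hbu : MemLp (upTr p q a b t b) (.ofReal q) μ := hbq.upTr hap.1 hbq.1
  have hal : MemLp (loTr p q a b t a) (.ofReal p) μ := by rw [loTr_eq_sub_upTr]; exact hap.sub hau
  have hbl : MemLp (loTr p q a b t b) (.ofReal q) μ := by rw [loTr_eq_sub_upTr]; exact hbq.sub hbu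
  constructor
  · rw [loTr_eq_sub_upTr, loTr_eq_sub_upTr]
    exact hC _ _ _ _ _ _ _ _ hap hbq hau hbu hsol hsolu
  · rw [upTr_eq_sub_loTr, upTr_eq_sub_loTr]
    exact hC _ _ _ _ _ _ _ _ hap hbq hal hbl hsol hsoll

/-- the energy estimates, Lemma "energy" of the paper.  There is a
constant `C`, independent of `f` and `t`, such that for every `f = (a,b) ∈ L^* × L^*`
with `ℜf = (α,β)` (so `H = f + ℜf`), every `t ≥ 0`, and the solutions
`ℜf^t = (αu,βu)`, `ℜf_t = (αl,βl)` for the truncated data: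
`∫ E^t ≤ C (∫ [f_t] + ∫ [f_t]^{1/p}[H]^{1/q} + ∫ [f_t]^{1/q}[H]^{1/p})`  and
`∫ E_t ≤ C (∫ [f^t] + ∫ [f^t]^{1/p}[H]^{1/q} + ∫ [f^t]^{1/q}[H]^{1/p})`,
where `E^t = ⟨H − H^t | H' − H'^t⟩` and `E_t = ⟨H − H_t | H' − H'_t⟩` are the energy
integrands. -/
theorem energy_estimates
    (μ : Measure X) [SigmaFinite μ]
    (K : Set (X → V)) (hK : IsClosedL2Subspace μ K)
    (𝔮 : ℝ) (𝔭 : ℝ≥0∞) (h𝔮₁ : 1 ≤ 𝔮) (h𝔮₂ : 𝔮 < 2) (h𝔭 : 2 < 𝔭)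
    (hconj : (ENNReal.ofReal 𝔮)⁻¹ + 𝔭⁻¹ = 1)
    (hproj : ∀ s : ℝ, 𝔮 < s → ENNReal.ofReal s < 𝔭 → ProjBounded μ K s)
    (p q : ℝ) (hp : 1 < p) (hpq : 1 / p + 1 / q = 1)
    (h𝔮q : 𝔮 < q) (hqp : q ≤ p) (hp𝔭 : ENNReal.ofReal p < 𝔭)
    (A : X → V → V) (CA cA : ℝ) (hCA : 0 < CA) (hcA : 0 < cA)
    (hA : IsPStructure μ p A CA cA) :
    ∃ C : ℝ, ∀ a b α β : X → V, MemLstar μ a → MemLstar μ b →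
      Solves μ K A p q a b α β →
      ∀ t : ℝ, 0 ≤ t →
      ∀ αu βu αl βl : X → V,
        Solves μ K A p q (upTr p q a b t a) (upTr p q a b t b) αu βu →
        Solves μ K A p q (loTr p q a b t a) (loTr p q a b t b) αl βl →
        (∫ x, ⟪(a x + α x) - (upTr p q a b t a x + αu x),
               (b x + β x) - (upTr p q a b t b x + βu x)⟫ ∂μ ≤
          C * (∫ x, br p q (loTr p q a b t a) (loTr p q a b t b) x ∂μ
             + ∫ x, br p q (loTr p q a b t a) (loTr p q a b t b) x ^ (1 / p) *
                 br p q (fun y => a y + α y) (fun y => b y + β y) x ^ (1 / q) ∂μ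
             + ∫ x, br p q (loTr p q a b t a) (loTr p q a b t b) x ^ (1 / q) *
                 br p q (fun y => a y + α y) (fun y => b y + β y) x ^ (1 / p) ∂μ)) ∧
        (∫ x, ⟪(a x + α x) - (loTr p q a b t a x + αl x),
               (b x + β x) - (loTr p q a b t b x + βl x)⟫ ∂μ ≤
          C * (∫ x, br p q (upTr p q a b t a) (upTr p q a b t b) x ∂μ
             + ∫ x, br p q (upTr p q a b t a) (upTr p q a b t b) x ^ (1 / p) *
                 br p q (fun y => a y + α y) (fun y => b y + β y) x ^ (1 / q) ∂μ
             + ∫ x, br p q (upTr p q a b t a) (upTr p q a b t b) x ^ (1 / q) *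
                 br p q (fun y => a y + α y) (fun y => b y + β y) x ^ (1 / p) ∂μ)) :=
  energy_estimates_general μ K p q hp hpq hqp A CA cA hCA hcA hA
end
end

section
/- Let 1 < p < ∞ and q = p/(p−1). If α ∈ L^p_+(X) and β ∈ L^q_-(X), then the function x ↦ ⟨α(x) | β(x)⟩ is integrable on X and ∫_X ⟨α(x) | β(x)⟩ dx = 0. -/
open MeasureTheory ENNReal
open scoped RealInnerProductSpace

noncomputable section

variable {X : Type*} [MeasurableSpace X] {V : Type*}
  [NormedAddCommGroup V] [InnerProductSpace ℝ V] [FiniteDimensional ℝ V]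

/-! By Hölder's inequality, `(f, g) ↦ ∫ ⟪f, g⟫` is a bounded bilinear pairing of `L^p` with `L^q`,
hence continuous. It vanishes on pairs from `K ∩ L^p` and `Kᗮ ∩ L^q` by definition of `Kᗮ`, so by
continuity it vanishes on pairs from their closures `L^p_+` and `L^q_-`. -/

open Filter Topology

namespace MeasureTheory

variable {Ω 𝕜 E : Type*} {m : MeasurableSpace Ω} {μ : Measure Ω} [RCLike 𝕜]
  [NormedAddCommGroup E] [InnerProductSpace 𝕜 E] {p q : ℝ≥0∞} [p.HolderConjugate q]
  {f f' g g' : Ω → E}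

theorem eLpNorm_one_inner_le (hf : AEStronglyMeasurable f μ) (hg : AEStronglyMeasurable g μ) :
    eLpNorm (fun x => inner 𝕜 (f x) (g x)) 1 μ ≤ eLpNorm f p μ * eLpNorm g q μ := by
  simpa using eLpNorm_le_eLpNorm_mul_eLpNorm'_of_norm hf hg (fun a b => inner 𝕜 a b) 1
    (.of_forall fun x => by simpa using norm_inner_le_norm (𝕜 := 𝕜) (f x) (g x))

theorem MemLp.integrable_inner (hf : MemLp f p μ) (hg : MemLp g q μ) :
    Integrable (fun x => inner 𝕜 (f x) (g x)) μ :=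
  memLp_one_iff_integrable.mp
    ⟨hf.1.inner hg.1, (eLpNorm_one_inner_le hf.1 hg.1).trans_lt (ENNReal.mul_lt_top hf.2 hg.2)⟩

theorem norm_integral_inner_le (hf : MemLp f p μ) (hg : MemLp g q μ) :
    ‖∫ x, inner 𝕜 (f x) (g x) ∂μ‖ ≤ (eLpNorm f p μ).toReal * (eLpNorm g q μ).toReal := by
  rw [← toReal_enorm, ← ENNReal.toReal_mul]
  refine ENNReal.toReal_mono (ENNReal.mul_lt_top hf.2 hg.2).ne ?_
  calc _ ≤ ∫⁻ x, ‖inner 𝕜 (f x) (g x)‖ₑ ∂μ := enorm_integral_le_lintegral_enorm _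
    _ = eLpNorm (fun x => inner 𝕜 (f x) (g x)) 1 μ := eLpNorm_one_eq_lintegral_enorm.symm
    _ ≤ _ := eLpNorm_one_inner_le hf.1 hg.1

theorem norm_integral_inner_sub_integral_inner_le (hf : MemLp f p μ) (hf' : MemLp f' p μ)
    (hg : MemLp g q μ) (hg' : MemLp g' q μ) :
    ‖∫ x, inner 𝕜 (f x) (g x) ∂μ - ∫ x, inner 𝕜 (f' x) (g' x) ∂μ‖ ≤
      (eLpNorm (f - f') p μ).toReal * (eLpNorm g q μ).toReal
        + (eLpNorm f p μ).toReal * (eLpNorm (g - g') q μ).toReal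
        + (eLpNorm (f - f') p μ).toReal * (eLpNorm (g - g') q μ).toReal := by
  have hdf := hf.sub hf'
  have hdg := hg.sub hg'
  have hsplit : ∫ x, inner 𝕜 (f x) (g x) ∂μ - ∫ x, inner 𝕜 (f' x) (g' x) ∂μ =
      ∫ x, inner 𝕜 ((f - f') x) (g x) ∂μ + ∫ x, inner 𝕜 (f x) ((g - g') x) ∂μ
        - ∫ x, inner 𝕜 ((f - f') x) ((g - g') x) ∂μ := by
    rw [← integral_sub (hf.integrable_inner hg) (hf'.integrable_inner hg'),
      ← integral_add (hdf.integrable_inner hg) (hf.integrable_inner hdg),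
      ← integral_sub ((hdf.integrable_inner hg).add (hf.integrable_inner hdg))
        (hdf.integrable_inner hdg)]
    congr 1 with x
    simp only [Pi.sub_apply, inner_sub_left, inner_sub_right]
    ring
  rw [hsplit]
  exact (norm_sub_le _ _).trans <| add_le_add ((norm_add_le _ _).trans <|
    add_le_add (norm_integral_inner_le hdf hg) (norm_integral_inner_le hf hdg))
    (norm_integral_inner_le hdf hdg)

end MeasureTheory

theorem pq_orthogonality_general
    (μ : Measure X)
    (K : Set (X → V))
    (p q : ℝ) (hp : 1 < p) (hq : q = p / (p - 1))
    (α β : X → V)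
    (hα : α ∈ LsCl μ K p) (hβ : β ∈ LsCl μ (OrthCompl μ K) q) :
    Integrable (fun x => ⟪α x, β x⟫) μ ∧ ∫ x, ⟪α x, β x⟫ ∂μ = 0 := by
  have : (ENNReal.ofReal p).HolderConjugate (ENNReal.ofReal q) :=
    ⟨by rw [inv_one, ((Real.holderConjugate_iff_eq_conjExponent hp).2 hq).inv_add_inv_ennreal]⟩
  refine ⟨hα.1.integrable_inner hβ.1, ?_⟩
  set A := (eLpNorm α (ENNReal.ofReal p) μ).toReal
  set B := (eLpNorm β (ENNReal.ofReal q) μ).toReal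
  have hbound : ∀ ε > 0, ‖∫ x, ⟪α x, β x⟫ ∂μ‖ ≤ ε * B + A * ε + ε * ε := by
    intro ε hε
    obtain ⟨a, haK, ha, hαa⟩ := hα.2 ε hε
    obtain ⟨b, ⟨-, hab⟩, hb, hβb⟩ := hβ.2 ε hε
    have hδα := ENNReal.toReal_le_of_le_ofReal hε.le hαa.le
    have hδβ := ENNReal.toReal_le_of_le_ofReal hε.le hβb.le
    calc _ = ‖∫ x, ⟪α x, β x⟫ ∂μ - ∫ x, ⟪a x, b x⟫ ∂μ‖ := by rw [hab a haK, sub_zero]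
      _ ≤ _ := norm_integral_inner_sub_integral_inner_le hα.1 ha hβ.1 hb
      _ ≤ _ := by gcongr
  have hbound_tendsto : Tendsto (fun ε => ε * B + A * ε + ε * ε) (𝓝[>] 0) (𝓝 0) :=
    tendsto_nhdsWithin_of_tendsto_nhds <|
      Continuous.tendsto' (by fun_prop) 0 0 (by simp)
  exact norm_le_zero_iff.1 (ge_of_tendsto hbound_tendsto (eventually_nhdsWithin_of_forall hbound))

/-- the `(p,q)`-orthogonality relation.  Let `1 < p < ∞` and
`q = p/(p−1)`.  If `α ∈ L^p_+(X)` and `β ∈ L^q_-(X)`, then `x ↦ ⟨α(x) | β(x)⟩` is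
integrable on `X` and `∫_X ⟨α(x) | β(x)⟩ dx = 0`. -/
theorem pq_orthogonality
    (μ : Measure X) [SigmaFinite μ]
    (K : Set (X → V)) (hK : IsClosedL2Subspace μ K)
    (p q : ℝ) (hp : 1 < p) (hq : q = p / (p - 1))
    (α β : X → V)
    (hα : α ∈ LsCl μ K p) (hβ : β ∈ LsCl μ (OrthCompl μ K) q) :
    Integrable (fun x => ⟪α x, β x⟫) μ ∧ ∫ x, ⟪α x, β x⟫ ∂μ = 0 :=
  pq_orthogonality_general μ K p q hp hq α β hα hβ
end
end

section
/- Let 1 < p < ∞ with Hölder conjugate q, and let A : V → V satisfy the homogeneity, Lipschitz and monotonicity conditions of a p-structure with constants C_𝔄, c_𝔄. Then A is a bijection of V onto V, and its inverse B := A^{−1} satisfies the analogous conditions with q in place of p: B(λw) = λ^{q−1} B(w) for all λ ≥ 0, and there exist constants C'', c'' > 0 depending only on p, C_𝔄, c_𝔄 such that |B(w₁) − B(w₂)| ≤ C'' (|w₁|+|w₂|)^{q−2} |w₁ − w₂| and ⟨B(w₁) − B(w₂) | w₁ − w₂⟩ ≥ c'' (|w₁|+|w₂|)^{q−2} |w₁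 − w₂|² for all w₁, w₂ ∈ V. -/
open scoped RealInnerProductSpace

/-!
Injectivity is immediate from monotonicity. The range of `A` is closed, since `A` is continuous
and `‖A v‖ ≥ cA * ‖v‖ ^ (p - 1)` makes it proper. Away from `0` the range is open: on the ball
of radius `‖v₀‖ / 2` about `v₀ ≠ 0` the weight `(‖v₁‖ + ‖v₂‖) ^ (p - 2)` is pinched between two
positive constants, so `A` is strongly monotone and Lipschitz there, hence close to a homothety
and open by the inverse function theorem. A closed set that is open away from `0` and meets the
open half-space `{y | 0 < ⟪w, y⟫}` contains `w`, and `A w` lies in that half-space.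

For the inverse `B`, `(p - 1) * (q - 1) = 1` gives the homogeneity, and the two-sided estimate
`‖A v₁‖ + ‖A v₂‖ ≍ (‖v₁‖ + ‖v₂‖) ^ (p - 1)` converts the weight `(‖v₁‖ + ‖v₂‖) ^ (2 - p)` into
`(‖w₁‖ + ‖w₂‖) ^ (q - 2)`. Monotonicity of `A` and Cauchy–Schwarz give the Lipschitz bound for
`B`; monotonicity and the Lipschitz bound of `A` together give the monotonicity of `B`.
-/

open Set Filter Metric

section InnerProduct

variable {E : Type*} [NormedAddCommGroup E] [InnerProductSpace ℝ E]

theorem mul_norm_le_of_mul_sq_le_inner {x y : E} {α : ℝ} (h : α * ‖x‖ ^ 2 ≤ ⟪y, x⟫) :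
    α * ‖x‖ ≤ ‖y‖ := by
  rcases eq_or_ne x 0 with rfl | hx
  · simp
  have hCS := h.trans (real_inner_le_norm y x)
  exact le_of_mul_le_mul_right (by linarith) (norm_pos_iff.2 hx)

theorem div_sq_mul_sq_le_inner {x y : E} {α β : ℝ} (hα : 0 ≤ α) (hβ : 0 < β)
    (h : α * ‖x‖ ^ 2 ≤ ⟪y, x⟫) (hy : ‖y‖ ≤ β * ‖x‖) : α / β ^ 2 * ‖y‖ ^ 2 ≤ ⟪y, x⟫ := by
  have hy2 : ‖y‖ ^ 2 ≤ β ^ 2 * ‖x‖ ^ 2 := by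
    rw [← mul_pow]; exact pow_le_pow_left₀ (norm_nonneg y) hy 2
  calc α / β ^ 2 * ‖y‖ ^ 2 ≤ α / β ^ 2 * (β ^ 2 * ‖x‖ ^ 2) := by gcongr
    _ = α * ‖x‖ ^ 2 := by field_simp
    _ ≤ ⟪y, x⟫ := h

theorem norm_sub_smul_sq_le {x y : E} {m L : ℝ} (hm : 0 < m)
    (hmono : m * ‖x‖ ^ 2 ≤ ⟪y, x⟫) (hlip : ‖y‖ ≤ L * ‖x‖) :
    ‖y - (L ^ 2 / m) • x‖ ^ 2 ≤ ((L ^ 2 / m) ^ 2 - L ^ 2) * ‖x‖ ^ 2 := by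
  have hy : ‖y‖ ^ 2 ≤ L ^ 2 * ‖x‖ ^ 2 := by
    rw [← mul_pow]; exact pow_le_pow_left₀ (norm_nonneg y) hlip 2
  rw [norm_sub_sq_real, real_inner_smul_right, norm_smul, Real.norm_eq_abs,
    abs_of_nonneg (by positivity)]
  have : L ^ 2 / m * (m * ‖x‖ ^ 2) = L ^ 2 * ‖x‖ ^ 2 := by field_simp
  nlinarith [mul_le_mul_of_nonneg_left hmono (by positivity : (0:ℝ) ≤ L ^ 2 / m)]

theorem isOpen_image_of_strongly_monotone_of_lipschitz [CompleteSpace E] {f : E → E}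
    {s : Set E} {m L : ℝ} (hm : 0 < m) (hL : 0 < L) (hs : IsOpen s)
    (hmono : ∀ x ∈ s, ∀ y ∈ s, m * ‖x - y‖ ^ 2 ≤ ⟪f x - f y, x - y⟫)
    (hlip : ∀ x ∈ s, ∀ y ∈ s, ‖f x - f y‖ ≤ L * ‖x - y‖) :
    IsOpen (f '' s) := by
  set a : ℝ := L ^ 2 / m
  have ha : 0 < a := by positivity
  have happrox : ApproximatesLinearOn f (a • ContinuousLinearMap.id ℝ E) s
      (√(a ^ 2 - L ^ 2)).toNNReal := by
    intro x hx y hy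
    have h := Real.sqrt_le_sqrt (norm_sub_smul_sq_le hm (hmono x hx y hy) (hlip x hx y hy))
    rwa [Real.sqrt_mul' _ (by positivity), Real.sqrt_sq (norm_nonneg _),
      Real.sqrt_sq (norm_nonneg _), ← Real.coe_toNNReal _ (Real.sqrt_nonneg _)] at h
  let inv : (a • ContinuousLinearMap.id ℝ E).NonlinearRightInverse :=
    { toFun := fun y => a⁻¹ • y
      nnnorm := a⁻¹.toNNReal
      bound' := fun y => by simp [norm_smul, abs_of_pos ha, ha.le]
      right_inv' := fun y => by simp [smul_smul, ha.ne'] }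
  refine happrox.open_image inv hs (Or.inr ?_)
  rw [← NNReal.coe_lt_coe, NNReal.coe_inv, Real.coe_toNNReal _ (Real.sqrt_nonneg _),
    Real.coe_toNNReal _ (by positivity), inv_inv, Real.sqrt_lt' ha]
  nlinarith

theorem mem_of_isClosed_of_isOpen_diff_zero {S : Set E} (hS : IsClosed S)
    (hS₀ : IsOpen (S \ {0})) {x w : E} (hx : x ∈ S) (hxw : 0 < ⟪w, x⟫) (hw : w ≠ 0) :
    w ∈ S := by
  let H : Set E := {y | 0 < ⟪w, y⟫}
  have hH : IsPreconnected H :=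
    (convex_halfSpace_gt (innerₛₗ ℝ w).isLinear 0).isPreconnected
  have hcover : H ⊆ (S \ {0}) ∪ Sᶜ := by
    intro y hy
    by_cases hyS : y ∈ S
    · refine Or.inl ⟨hyS, ?_⟩
      rintro rfl
      simp [H] at hy
    · exact Or.inr hyS
  have hwH : w ∈ H := by
    show 0 < ⟪w, w⟫
    rw [real_inner_self_eq_norm_sq]
    exact pow_pos (norm_pos_iff.2 hw) 2
  have hx₀ : x ∉ ({0} : Set E) := by
    rintro rfl
    simp at hxw
  exact (hH.subset_left_of_subset_union hS₀ hS.isOpen_compl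
    (disjoint_compl_right.mono_left sdiff_subset) hcover ⟨x, hxw, hx, hx₀⟩ hwH).1

end InnerProduct

section Rpow

variable {x y c₁ c₂ e : ℝ}

theorem min_rpow_mul_rpow_le (hc₁ : 0 < c₁) (hy : 0 < y) (h₁ : c₁ * y ≤ x) (h₂ : x ≤ c₂ * y) :
    min (c₁ ^ e) (c₂ ^ e) * y ^ e ≤ x ^ e := by
  have hx : 0 < x := (mul_pos hc₁ hy).trans_le h₁
  rcases le_total 0 e with he | he
  · calc min (c₁ ^ e) (c₂ ^ e) * y ^ e ≤ c₁ ^ e * y ^ e := by gcongr; exact min_le_left _ _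
      _ = (c₁ * y) ^ e := (Real.mul_rpow hc₁.le hy.le).symm
      _ ≤ x ^ e := Real.rpow_le_rpow (by positivity) h₁ he
  · calc min (c₁ ^ e) (c₂ ^ e) * y ^ e ≤ c₂ ^ e * y ^ e := by gcongr; exact min_le_right _ _
      _ = (c₂ * y) ^ e := (Real.mul_rpow (by nlinarith) hy.le).symm
      _ ≤ x ^ e := Real.rpow_le_rpow_of_nonpos hx h₂ he

theorem rpow_le_max_rpow_mul_rpow (hc₁ : 0 < c₁) (hy : 0 < y) (h₁ : c₁ * y ≤ x)
    (h₂ : x ≤ c₂ * y) : x ^ e ≤ max (c₁ ^ e) (c₂ ^ e) * y ^ e := by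
  have hx : 0 < x := (mul_pos hc₁ hy).trans_le h₁
  rcases le_total 0 e with he | he
  · calc x ^ e ≤ (c₂ * y) ^ e := Real.rpow_le_rpow hx.le h₂ he
      _ = c₂ ^ e * y ^ e := Real.mul_rpow (by nlinarith) hy.le
      _ ≤ max (c₁ ^ e) (c₂ ^ e) * y ^ e := by gcongr; exact le_max_right _ _
  · calc x ^ e ≤ (c₁ * y) ^ e := Real.rpow_le_rpow_of_nonpos (by positivity) h₁ he
      _ = c₁ ^ e * y ^ e := Real.mul_rpow hc₁.le hy.le
      _ ≤ max (c₁ ^ e) (c₂ ^ e) * y ^ e := by gcongr; exact le_max_left _ _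

end Rpow

theorem norm_add_norm_pos_of_ne {E : Type*} [NormedAddCommGroup E] {x y : E} (h : x ≠ y) :
    0 < ‖x‖ + ‖y‖ :=
  (norm_pos_iff.2 (sub_ne_zero.2 h)).trans_le (norm_sub_le x y)

theorem norm_add_norm_mem_of_mem_ball {E : Type*} [NormedAddCommGroup E] {x y z : E}
    (hx : x ∈ ball z (‖z‖ / 2)) (hy : y ∈ ball z (‖z‖ / 2)) :
    1 * ‖z‖ ≤ ‖x‖ + ‖y‖ ∧ ‖x‖ + ‖y‖ ≤ 3 * ‖z‖ := by
  rw [mem_ball, dist_eq_norm] at hx hy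
  have e₁ := abs_norm_sub_norm_le x z
  have e₂ := abs_norm_sub_norm_le y z
  rw [abs_le] at e₁ e₂
  constructor <;> linarith [e₁.1, e₁.2, e₂.1, e₂.2]

namespace IsPStructureMap

variable {V : Type*} [NormedAddCommGroup V] [InnerProductSpace ℝ V] {p CA cA : ℝ} {A : V → V}

theorem map_zero (hA : IsPStructureMap p A CA cA) (hp : p ≠ 1) : A 0 = 0 := by
  simpa [Real.zero_rpow (sub_ne_zero.2 hp)] using hA.homog 0 le_rfl 0

theorem norm_map_le (hA : IsPStructureMap p A CA cA) (hp : p ≠ 1) (v : V) :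
    ‖A v‖ ≤ CA * ‖v‖ ^ (p - 1) := by
  have h := hA.lipschitz v 0
  rwa [hA.map_zero hp, sub_zero, sub_zero, norm_zero, add_zero,
    ← Real.rpow_add_one' (norm_nonneg v) (by contrapose! hp; linarith),
    show p - 2 + 1 = p - 1 by ring] at h

theorem mul_sq_le_inner (hA : IsPStructureMap p A CA cA) (v₁ v₂ : V) :
    cA * (‖v₁‖ + ‖v₂‖) ^ (p - 2) * ‖v₁ - v₂‖ ^ 2 ≤ ⟪A v₁ - A v₂, v₁ - v₂⟫ := by
  simpa only [Real.rpow_two, mul_assoc] using hA.monotone v₁ v₂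

theorem mul_rpow_le_norm_map (hA : IsPStructureMap p A CA cA) (hp : p ≠ 1) (v : V) :
    cA * ‖v‖ ^ (p - 1) ≤ ‖A v‖ := by
  have h := hA.mul_sq_le_inner v 0
  rw [hA.map_zero hp, sub_zero, sub_zero, norm_zero, add_zero] at h
  have := mul_norm_le_of_mul_sq_le_inner h
  rwa [mul_assoc, ← Real.rpow_add_one' (norm_nonneg v) (by contrapose! hp; linarith),
    show p - 2 + 1 = p - 1 by ring] at this

theorem injective (hA : IsPStructureMap p A CA cA) (hcA : 0 < cA) : Function.Injective A := by
  intro v₁ v₂ h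
  by_contra hne
  have hmono := hA.mul_sq_le_inner v₁ v₂
  rw [h, sub_self, inner_zero_left] at hmono
  have hpos : 0 < cA * (‖v₁‖ + ‖v₂‖) ^ (p - 2) * ‖v₁ - v₂‖ ^ 2 := by
    have := Real.rpow_pos_of_pos (norm_add_norm_pos_of_ne hne) (p - 2)
    have := norm_pos_iff.2 (sub_ne_zero.2 hne)
    positivity
  linarith

section Local

variable {v₀ x y : V}

theorem mul_sq_le_inner_of_mem_ball (hA : IsPStructureMap p A CA cA) (hcA : 0 ≤ cA)
    (hv₀ : v₀ ≠ 0) (hx : x ∈ ball v₀ (‖v₀‖ / 2)) (hy : y ∈ ball v₀ (‖v₀‖ / 2)) :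
    cA * (min 1 (3 ^ (p - 2)) * ‖v₀‖ ^ (p - 2)) * ‖x - y‖ ^ 2 ≤ ⟪A x - A y, x - y⟫ := by
  obtain ⟨h₁, h₂⟩ := norm_add_norm_mem_of_mem_ball hx hy
  have hS := min_rpow_mul_rpow_le (e := p - 2) one_pos (norm_pos_iff.2 hv₀) h₁ h₂
  rw [Real.one_rpow] at hS
  calc cA * (min 1 (3 ^ (p - 2)) * ‖v₀‖ ^ (p - 2)) * ‖x - y‖ ^ 2
      ≤ cA * (‖x‖ + ‖y‖) ^ (p - 2) * ‖x - y‖ ^ 2 := by gcongr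
    _ ≤ ⟪A x - A y, x - y⟫ := hA.mul_sq_le_inner x y

theorem norm_sub_le_of_mem_ball (hA : IsPStructureMap p A CA cA) (hCA : 0 ≤ CA)
    (hv₀ : v₀ ≠ 0) (hx : x ∈ ball v₀ (‖v₀‖ / 2)) (hy : y ∈ ball v₀ (‖v₀‖ / 2)) :
    ‖A x - A y‖ ≤ CA * (max 1 (3 ^ (p - 2)) * ‖v₀‖ ^ (p - 2)) * ‖x - y‖ := by
  obtain ⟨h₁, h₂⟩ := norm_add_norm_mem_of_mem_ball hx hy
  have hS := rpow_le_max_rpow_mul_rpow (e := p - 2) one_pos (norm_pos_iff.2 hv₀) h₁ h₂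
  rw [Real.one_rpow] at hS
  calc ‖A x - A y‖ ≤ CA * ((‖x‖ + ‖y‖) ^ (p - 2) * ‖x - y‖) := hA.lipschitz x y
    _ ≤ CA * (max 1 (3 ^ (p - 2)) * ‖v₀‖ ^ (p - 2)) * ‖x - y‖ := by
      rw [← mul_assoc]; gcongr

theorem continuousAt_of_ne_zero (hA : IsPStructureMap p A CA cA) (hCA : 0 ≤ CA)
    (hv₀ : v₀ ≠ 0) : ContinuousAt A v₀ := by
  have hlip : LipschitzOnWith (CA * (max 1 (3 ^ (p - 2)) * ‖v₀‖ ^ (p - 2))).toNNReal A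
      (ball v₀ (‖v₀‖ / 2)) := by
    refine LipschitzOnWith.of_dist_le_mul fun x hx y hy => ?_
    rw [dist_eq_norm, dist_eq_norm, Real.coe_toNNReal _ (by positivity)]
    exact hA.norm_sub_le_of_mem_ball hCA hv₀ hx hy
  exact hlip.continuousOn.continuousAt (ball_mem_nhds v₀ (by positivity))

theorem isOpen_image_ball [CompleteSpace V] (hA : IsPStructureMap p A CA cA) (hCA : 0 < CA)
    (hcA : 0 < cA) (hv₀ : v₀ ≠ 0) : IsOpen (A '' ball v₀ (‖v₀‖ / 2)) := by
  have hv₀' : 0 < ‖v₀‖ := norm_pos_iff.2 hv₀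
  exact isOpen_image_of_strongly_monotone_of_lipschitz (by positivity) (by positivity)
    isOpen_ball (fun x hx y hy => hA.mul_sq_le_inner_of_mem_ball hcA.le hv₀ hx hy)
    (fun x hx y hy => hA.norm_sub_le_of_mem_ball hCA.le hv₀ hx hy)

end Local

theorem continuousAt_zero (hA : IsPStructureMap p A CA cA) (hp : 1 < p) :
    ContinuousAt A 0 := by
  have hcont : Continuous fun v : V => CA * ‖v‖ ^ (p - 1) :=
    continuous_const.mul ((Real.continuous_rpow_const (by linarith)).comp continuous_norm)
  have hlim := hcont.tendsto 0
  rw [norm_zero, Real.zero_rpow (by linarith), mul_zero] at hlim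
  rw [ContinuousAt, hA.map_zero hp.ne']
  exact squeeze_zero_norm (hA.norm_map_le hp.ne') hlim

theorem continuous (hA : IsPStructureMap p A CA cA) (hp : 1 < p) (hCA : 0 ≤ CA) :
    Continuous A := by
  refine continuous_iff_continuousAt.2 fun v => ?_
  rcases eq_or_ne v 0 with rfl | hv
  · exact hA.continuousAt_zero hp
  · exact hA.continuousAt_of_ne_zero hCA hv

theorem isClosed_range [FiniteDimensional ℝ V] (hA : IsPStructureMap p A CA cA) (hp : 1 < p)
    (hCA : 0 ≤ CA) (hcA : 0 < cA) : IsClosed (range A) := by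
  refine (isProperMap_iff_tendsto_cocompact.2 ⟨hA.continuous hp hCA, ?_⟩).isClosed_range
  rw [← Metric.cobounded_eq_cocompact, ← tendsto_norm_atTop_iff_cobounded]
  refine tendsto_atTop_mono (hA.mul_rpow_le_norm_map hp.ne') ?_
  exact ((tendsto_rpow_atTop (by linarith)).comp tendsto_norm_cobounded_atTop).const_mul_atTop hcA

theorem isOpen_range_diff_zero [CompleteSpace V] (hA : IsPStructureMap p A CA cA) (hp : p ≠ 1)
    (hCA : 0 < CA) (hcA : 0 < cA) : IsOpen (range A \ {0}) := by
  refine isOpen_iff_mem_nhds.2 ?_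
  rintro _ ⟨⟨v, rfl⟩, hv⟩
  have hv₀ : v ≠ 0 := by rintro rfl; exact hv (hA.map_zero hp)
  refine mem_of_superset ((hA.isOpen_image_ball hCA hcA hv₀).mem_nhds
    ⟨v, mem_ball_self (by positivity), rfl⟩) ?_
  rintro _ ⟨x, hx, rfl⟩
  refine ⟨mem_range_self x, fun h0 => ?_⟩
  have hx₀ : x = 0 := hA.injective hcA (h0.trans (hA.map_zero hp).symm)
  rw [hx₀, mem_ball, dist_zero_left] at hx
  linarith [norm_nonneg v]

theorem surjective [FiniteDimensional ℝ V] (hA : IsPStructureMap p A CA cA) (hp : 1 < p)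
    (hCA : 0 < CA) (hcA : 0 < cA) : Function.Surjective A := by
  intro w
  rcases eq_or_ne w 0 with rfl | hw
  · exact ⟨0, hA.map_zero hp.ne'⟩
  have hpos : 0 < ⟪w, A w⟫ := by
    have h := hA.mul_sq_le_inner w 0
    rw [hA.map_zero hp.ne', sub_zero, sub_zero, norm_zero, add_zero, real_inner_comm] at h
    have : 0 < ‖w‖ := norm_pos_iff.2 hw
    exact lt_of_lt_of_le (by positivity) h
  exact mem_of_isClosed_of_isOpen_diff_zero (hA.isClosed_range hp hCA.le hcA)
    (hA.isOpen_range_diff_zero hp.ne' hCA hcA) (mem_range_self w) hpos hw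

section Inverse

variable {q : ℝ} {B : V → V}

theorem homog_of_inverse (hA : IsPStructureMap p A CA cA) (hpq : (p - 1) * (q - 1) = 1)
    (hBL : Function.LeftInverse B A) (hBR : Function.RightInverse B A) (l : ℝ) (hl : 0 ≤ l)
    (w : V) : B (l • w) = l ^ (q - 1) • B w := by
  have h : A (l ^ (q - 1) • B w) = l • w := by
    rw [hA.homog _ (Real.rpow_nonneg hl _), hBR w, ← Real.rpow_mul hl, mul_comm, hpq,
      Real.rpow_one]
  rw [← h, hBL]

theorem mul_norm_sub_le (hA : IsPStructureMap p A CA cA) (v₁ v₂ : V) :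
    cA * ‖v₁ - v₂‖ ≤ (‖v₁‖ + ‖v₂‖) ^ (2 - p) * ‖A v₁ - A v₂‖ := by
  rcases eq_or_ne v₁ v₂ with rfl | hne
  · simp
  have hS := norm_add_norm_pos_of_ne hne
  have h := mul_norm_le_of_mul_sq_le_inner (hA.mul_sq_le_inner v₁ v₂)
  rw [show 2 - p = -(p - 2) by ring, Real.rpow_neg hS.le, ← div_eq_inv_mul,
    le_div_iff₀ (Real.rpow_pos_of_pos hS _)]
  linarith

theorem div_sq_mul_le_inner (hA : IsPStructureMap p A CA cA) (hCA : 0 < CA) (hcA : 0 ≤ cA)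
    (v₁ v₂ : V) :
    cA / CA ^ 2 * ((‖v₁‖ + ‖v₂‖) ^ (2 - p) * ‖A v₁ - A v₂‖ ^ 2) ≤ ⟪A v₁ - A v₂, v₁ - v₂⟫ := by
  rcases eq_or_ne v₁ v₂ with rfl | hne
  · simp
  have hS₀ := norm_add_norm_pos_of_ne hne
  have hS := Real.rpow_pos_of_pos hS₀ (p - 2)
  have hlip : ‖A v₁ - A v₂‖ ≤ CA * (‖v₁‖ + ‖v₂‖) ^ (p - 2) * ‖v₁ - v₂‖ := by
    rw [mul_assoc]; exact hA.lipschitz v₁ v₂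
  have h := div_sq_mul_sq_le_inner (by positivity) (by positivity) (hA.mul_sq_le_inner v₁ v₂)
    hlip
  rw [show 2 - p = -(p - 2) by ring, Real.rpow_neg hS₀.le]
  convert h using 1
  field_simp

theorem norm_add_norm_map_le (hA : IsPStructureMap p A CA cA) (hp : 1 < p) (hCA : 0 ≤ CA)
    (v₁ v₂ : V) : ‖A v₁‖ + ‖A v₂‖ ≤ 2 * CA * (‖v₁‖ + ‖v₂‖) ^ (p - 1) := by
  have hle : ∀ v : V, ‖v‖ ≤ ‖v₁‖ + ‖v₂‖ → ‖A v‖ ≤ CA * (‖v₁‖ + ‖v₂‖) ^ (p - 1) := fun v hv =>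
    (hA.norm_map_le hp.ne' v).trans (by gcongr)
  linarith [hle v₁ (by linarith [norm_nonneg v₂]), hle v₂ (by linarith [norm_nonneg v₁])]

theorem mul_rpow_le_two_rpow_mul (hA : IsPStructureMap p A CA cA) (hp : 1 < p) (hcA : 0 ≤ cA)
    (v₁ v₂ : V) : cA * (‖v₁‖ + ‖v₂‖) ^ (p - 1) ≤ 2 ^ (p - 1) * (‖A v₁‖ + ‖A v₂‖) := by
  have key : ∀ a b : V, ‖b‖ ≤ ‖a‖ → cA * (‖a‖ + ‖b‖) ^ (p - 1) ≤ 2 ^ (p - 1) * ‖A a‖ := by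
    intro a b hba
    calc cA * (‖a‖ + ‖b‖) ^ (p - 1) ≤ cA * (2 * ‖a‖) ^ (p - 1) := by
          gcongr
          linarith
      _ = 2 ^ (p - 1) * (cA * ‖a‖ ^ (p - 1)) := by
          rw [Real.mul_rpow zero_le_two (norm_nonneg a)]; ring
      _ ≤ 2 ^ (p - 1) * ‖A a‖ := by gcongr; exact hA.mul_rpow_le_norm_map hp.ne' a
  have h2 : 0 ≤ (2 : ℝ) ^ (p - 1) := by positivity
  rcases le_total ‖v₂‖ ‖v₁‖ with h | h
  · nlinarith [key v₁ v₂ h, norm_nonneg (A v₂)]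
  · nlinarith [add_comm ‖v₁‖ ‖v₂‖ ▸ key v₂ v₁ h, norm_nonneg (A v₁)]

theorem rpow_two_sub_norm_add_mem_Icc (hA : IsPStructureMap p A CA cA) (hp : 1 < p)
    (hpq : (p - 1) * (q - 1) = 1) (hCA : 0 < CA) (hcA : 0 < cA) {v₁ v₂ : V}
    (hT : 0 < ‖A v₁‖ + ‖A v₂‖) :
    (‖v₁‖ + ‖v₂‖) ^ (2 - p) ∈
      Icc (min ((2 * CA)⁻¹ ^ (q - 2)) ((2 ^ (p - 1) / cA) ^ (q - 2)) *
          (‖A v₁‖ + ‖A v₂‖) ^ (q - 2))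
        (max ((2 * CA)⁻¹ ^ (q - 2)) ((2 ^ (p - 1) / cA) ^ (q - 2)) *
          (‖A v₁‖ + ‖A v₂‖) ^ (q - 2)) := by
  have hS : 0 ≤ ‖v₁‖ + ‖v₂‖ := by positivity
  have h₁ : (2 * CA)⁻¹ * (‖A v₁‖ + ‖A v₂‖) ≤ (‖v₁‖ + ‖v₂‖) ^ (p - 1) := by
    rw [inv_mul_le_iff₀ (by positivity)]
    exact hA.norm_add_norm_map_le hp hCA.le v₁ v₂
  have h₂ : (‖v₁‖ + ‖v₂‖) ^ (p - 1) ≤ 2 ^ (p - 1) / cA * (‖A v₁‖ + ‖A v₂‖) := by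
    rw [div_mul_eq_mul_div, le_div_iff₀ hcA, mul_comm]
    exact hA.mul_rpow_le_two_rpow_mul hp hcA.le v₁ v₂
  rw [show 2 - p = (p - 1) * (q - 2) by linear_combination -hpq, Real.rpow_mul hS]
  exact ⟨min_rpow_mul_rpow_le (by positivity) hT h₁ h₂,
    rpow_le_max_rpow_mul_rpow (by positivity) hT h₁ h₂⟩

theorem isPStructureMap_of_inverse (hA : IsPStructureMap p A CA cA)
    (hpq : (p - 1) * (q - 1) = 1) (hCA : 0 < CA) (hcA : 0 < cA) {m M : ℝ}
    (hbounds : ∀ v₁ v₂ : V, 0 < ‖A v₁‖ + ‖A v₂‖ →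
      (‖v₁‖ + ‖v₂‖) ^ (2 - p) ∈
        Icc (m * (‖A v₁‖ + ‖A v₂‖) ^ (q - 2)) (M * (‖A v₁‖ + ‖A v₂‖) ^ (q - 2)))
    (hBL : Function.LeftInverse B A) (hBR : Function.RightInverse B A) :
    IsPStructureMap q B (M / cA) (cA / CA ^ 2 * m) where
  homog := hA.homog_of_inverse hpq hBL hBR
  lipschitz w₁ w₂ := by
    rcases eq_or_ne w₁ w₂ with rfl | hne
    · simp
    have hT : 0 < ‖A (B w₁)‖ + ‖A (B w₂)‖ := by
      rw [hBR w₁, hBR w₂]; exact norm_add_norm_pos_of_ne hne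
    have hS := (hbounds _ _ hT).2
    have h := hA.mul_norm_sub_le (B w₁) (B w₂)
    rw [hBR w₁, hBR w₂] at hS h
    rw [div_mul_eq_mul_div, le_div_iff₀ hcA, mul_comm, ← mul_assoc]
    calc cA * ‖B w₁ - B w₂‖ ≤ (‖B w₁‖ + ‖B w₂‖) ^ (2 - p) * ‖w₁ - w₂‖ := h
      _ ≤ M * (‖w₁‖ + ‖w₂‖) ^ (q - 2) * ‖w₁ - w₂‖ := by gcongr
  monotone w₁ w₂ := by
    rcases eq_or_ne w₁ w₂ with rfl | hne
    · simp
    have hT : 0 < ‖A (B w₁)‖ + ‖A (B w₂)‖ := by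
      rw [hBR w₁, hBR w₂]; exact norm_add_norm_pos_of_ne hne
    have hS := (hbounds _ _ hT).1
    have h := hA.div_sq_mul_le_inner hCA hcA.le (B w₁) (B w₂)
    rw [hBR w₁, hBR w₂] at hS h
    rw [Real.rpow_two, real_inner_comm]
    calc cA / CA ^ 2 * m * ((‖w₁‖ + ‖w₂‖) ^ (q - 2) * ‖w₁ - w₂‖ ^ 2)
        = cA / CA ^ 2 * (m * (‖w₁‖ + ‖w₂‖) ^ (q - 2) * ‖w₁ - w₂‖ ^ 2) := by ring
      _ ≤ cA / CA ^ 2 * ((‖B w₁‖ + ‖B w₂‖) ^ (2 - p) * ‖w₁ - w₂‖ ^ 2) := by gcongr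
      _ ≤ ⟪w₁ - w₂, B w₁ - B w₂⟫ := h

end Inverse

end IsPStructureMap

/-- If `A : V → V` satisfies the conditions of a `p`-structure
(`1 < p < ∞`, conjugate `q`), then `A` is a bijection of `V` onto `V`, and any (two-sided)
inverse `B` of `A` satisfies the analogous conditions with `q` in place of `p`:
`B(λw) = λ^{q−1}B(w)` for `λ ≥ 0`, and with constants `C'', c'' > 0` depending only on
`p, CA, cA`, the `q`-Lipschitz and `q`-monotonicity inequalities hold. -/
theorem p_structure_inverse_is_q_structure
    {V : Type*} [NormedAddCommGroup V] [InnerProductSpace ℝ V] [FiniteDimensional ℝ V]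
    (p q : ℝ) (hp : 1 < p) (hpq : 1 / p + 1 / q = 1)
    (CA cA : ℝ) (hCA : 0 < CA) (hcA : 0 < cA) :
    ∃ C'' c'' : ℝ, 0 < C'' ∧ 0 < c'' ∧
      ∀ A : V → V, IsPStructureMap p A CA cA →
        Function.Bijective A ∧
        ∀ B : V → V, Function.LeftInverse B A → Function.RightInverse B A →
          IsPStructureMap q B C'' c'' := by
  have hpq' : (p - 1) * (q - 1) = 1 := by
    linear_combination
      (Real.holderConjugate_iff.2 ⟨hp, by simpa only [one_div] using hpq⟩).mul_eq_add
  set m := min ((2 * CA)⁻¹ ^ (q - 2)) ((2 ^ (p - 1) / cA) ^ (q - 2))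
  set M := max ((2 * CA)⁻¹ ^ (q - 2)) ((2 ^ (p - 1) / cA) ^ (q - 2))
  have hm : 0 < m := lt_min (by positivity) (by positivity)
  have hM : 0 < M := hm.trans_le min_le_max
  refine ⟨M / cA, cA / CA ^ 2 * m, by positivity, by positivity, fun A hA => ?_⟩
  refine ⟨⟨hA.injective hcA, hA.surjective hp hCA hcA⟩, fun B hBL hBR => ?_⟩
  exact hA.isPStructureMap_of_inverse hpq' hCA hcA
    (fun _ _ hT => hA.rpow_two_sub_norm_add_mem_Icc hp hpq' hCA hcA hT) hBL hBR
end

section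
/- Let 1 < p < ∞ and let A : V → V be the map A(v) := |v|^{p−2} v (with A(0) := 0). Then there exist constants C, c > 0 depending only on p such that for all v₁, v₂ ∈ V: |A(v₁) − A(v₂)| ≤ C (|v₁| + |v₂|)^{p−2} |v₁ − v₂| and ⟨A(v₁) − A(v₂) | v₁ − v₂⟩ ≥ c (|v₁| + |v₂|)^{p−2} |v₁ − v₂|²; moreover A(λv) = λ^{p−1} A(v) for all λ ≥ 0. In other words, the p-power map satisfies the structural (homogeneity, Lipschitz and monotonicity) conditions of a p-structure. -/
open scoped RealInnerProductSpace

/-!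
Writing `s = ‖v₁‖ ≥ t = ‖v₂‖`, everything reduces to the tangent-line (Bernoulli) inequality for
`x ↦ x ^ (p - 1)` at `s`, which is convex for `p ≥ 2` and concave for `p ≤ 2`, together with
`(s + t) / 2 ≤ s ≤ s + t`. For the Lipschitz bound split
`A v₁ - A v₂ = s ^ (p - 2) • (v₁ - v₂) + (s ^ (p - 2) - t ^ (p - 2)) • v₂`. For monotonicity,
with `w = s t - ⟪v₁, v₂⟫ ≥ 0`,
`⟪A v₁ - A v₂, v₁ - v₂⟫ = (s ^ (p - 1) - t ^ (p - 1)) (s - t) + (s ^ (p - 2) + t ^ (p - 2)) w` and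
`‖v₁ - v₂‖ ^ 2 = (s - t) ^ 2 + 2 w`, so the radial and the angular parts can be compared separately.
-/

namespace Real

variable {p q s t : ℝ}

lemma rpow_sub_two_mul_self (hs : 0 ≤ s) (hp : p ≠ 1) : s ^ (p - 2) * s = s ^ (p - 1) := by
  rw [← rpow_add_one' hs (by contrapose! hp; linarith)]
  ring_nf

lemma rpow_mul_one_add_mul_div_sub_one (hs : 0 < s) (q : ℝ) :
    s ^ q * (1 + q * (t / s - 1)) = s ^ q + q * s ^ (q - 1) * (t - s) := by
  rw [rpow_sub_one hs.ne']
  field_simp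

lemma rpow_mul_rpow_div (hs : 0 < s) (ht : 0 ≤ t) (q : ℝ) : s ^ q * (t / s) ^ q = t ^ q := by
  rw [div_rpow ht hs.le, mul_div_cancel₀ _ (rpow_pos_of_pos hs q).ne']

lemma rpow_add_mul_rpow_sub_one_mul_sub_le_rpow (hs : 0 < s) (ht : 0 ≤ t) (hq : 1 ≤ q) :
    s ^ q + q * s ^ (q - 1) * (t - s) ≤ t ^ q := by
  have bernoulli := one_add_mul_self_le_rpow_one_add
    (by linarith [div_nonneg ht hs.le] : -1 ≤ t / s - 1) hq
  rw [add_sub_cancel] at bernoulli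
  rw [← rpow_mul_one_add_mul_div_sub_one hs, ← rpow_mul_rpow_div hs ht]
  exact mul_le_mul_of_nonneg_left bernoulli (rpow_nonneg hs.le q)

lemma rpow_le_rpow_add_mul_rpow_sub_one_mul_sub (hs : 0 < s) (ht : 0 ≤ t) (hq₀ : 0 ≤ q)
    (hq₁ : q ≤ 1) : t ^ q ≤ s ^ q + q * s ^ (q - 1) * (t - s) := by
  have bernoulli := rpow_one_add_le_one_add_mul_self
    (by linarith [div_nonneg ht hs.le] : -1 ≤ t / s - 1) hq₀ hq₁
  rw [add_sub_cancel] at bernoulli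
  rw [← rpow_mul_one_add_mul_div_sub_one hs, ← rpow_mul_rpow_div hs ht]
  exact mul_le_mul_of_nonneg_left bernoulli (rpow_nonneg hs.le q)

lemma rpow_le_two_rpow_abs_mul_rpow (hs : 0 < s) (hst : s ≤ 2 * t) (hts : t ≤ 2 * s) (r : ℝ) :
    s ^ r ≤ 2 ^ |r| * t ^ r := by
  rcases le_or_gt 0 r with hr | hr
  · rw [abs_of_nonneg hr, ← mul_rpow zero_le_two (by linarith)]
    exact rpow_le_rpow hs.le hst hr
  · rw [abs_of_neg hr, rpow_neg zero_le_two, ← inv_rpow zero_le_two, ← mul_rpow (by norm_num)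
      (by linarith)]
    exact rpow_le_rpow_of_nonpos (by linarith) (by linarith) hr.le

lemma abs_rpow_sub_two_sub_rpow_sub_two_mul_le (hp : 1 < p) (ht : 0 ≤ t) (hts : t ≤ s)
    (hs : 0 < s) : |s ^ (p - 2) - t ^ (p - 2)| * t ≤ |p - 2| * (s ^ (p - 2) * (s - t)) := by
  rcases ht.eq_or_lt with rfl | ht
  · rw [mul_zero]; positivity
  -- the second summand is the tangent of `x ^ (p - 1)` at `s` minus `x ^ (p - 1)`, evaluated at
  -- `t`; its sign is that of `2 - p`
  have split : (s ^ (p - 2) - t ^ (p - 2)) * t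
      = (p - 2) * (s ^ (p - 2) * (s - t))
        + (s ^ (p - 1) + (p - 1) * s ^ (p - 2) * (t - s) - t ^ (p - 1)) := by
    linear_combination rpow_sub_two_mul_self hs.le hp.ne' - rpow_sub_two_mul_self ht.le hp.ne'
  rcases le_or_gt 2 p with hp2 | hp2
  · have tangent := rpow_add_mul_rpow_sub_one_mul_sub_le_rpow hs ht.le (by linarith : 1 ≤ p - 1)
    rw [show p - 1 - 1 = p - 2 by ring] at tangent
    rw [abs_of_nonneg (sub_nonneg.2 (rpow_le_rpow ht.le hts (by linarith))),
      abs_of_nonneg (by linarith)]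
    linarith
  · have tangent := rpow_le_rpow_add_mul_rpow_sub_one_mul_sub hs ht.le (by linarith : 0 ≤ p - 1)
      (by linarith)
    rw [show p - 1 - 1 = p - 2 by ring] at tangent
    rw [abs_of_nonpos (sub_nonpos.2 (rpow_le_rpow_of_nonpos ht hts (by linarith))),
      abs_of_neg (by linarith)]
    linarith

lemma min_one_mul_rpow_sub_two_mul_sub_le (hp : 1 < p) (ht : 0 ≤ t) (hts : t ≤ s)
    (hs : 0 < s) : min 1 (p - 1) * (s ^ (p - 2) * (s - t)) ≤ s ^ (p - 1) - t ^ (p - 1) := by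
  rw [← rpow_sub_two_mul_self hs.le hp.ne', ← rpow_sub_two_mul_self ht hp.ne']
  rcases le_or_gt 2 p with hp2 | hp2
  · rw [min_eq_left (by linarith), one_mul]
    have := mul_le_mul_of_nonneg_right (rpow_le_rpow ht hts (by linarith : 0 ≤ p - 2)) ht
    linarith
  · have tangent := rpow_le_rpow_add_mul_rpow_sub_one_mul_sub hs ht (by linarith : 0 ≤ p - 1)
      (by linarith)
    rw [show p - 1 - 1 = p - 2 by ring, ← rpow_sub_two_mul_self hs.le hp.ne',
      ← rpow_sub_two_mul_self ht hp.ne'] at tangent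
    rw [min_eq_right (by linarith)]
    linarith

end Real

lemma norm_smul_sub_smul_le {E : Type*} [SeminormedAddCommGroup E] [NormedSpace ℝ E]
    (a b : ℝ) (v w : E) : ‖a • v - b • w‖ ≤ |a| * ‖v - w‖ + |a - b| * ‖w‖ := by
  calc ‖a • v - b • w‖ = ‖a • (v - w) + (a - b) • w‖ := by congr 1; module
    _ ≤ |a| * ‖v - w‖ + |a - b| * ‖w‖ := by
      simpa only [norm_smul, Real.norm_eq_abs] using norm_add_le (a • (v - w)) ((a - b) • w)

section PowerMap

variable {V : Type*} [NormedAddCommGroup V] [InnerProductSpace ℝ V] {p : ℝ}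

noncomputable def powerMap (p : ℝ) (v : V) : V := ‖v‖ ^ (p - 2) • v

lemma powerMap_smul (hp : p ≠ 1) {l : ℝ} (hl : 0 ≤ l) (v : V) :
    powerMap p (l • v) = l ^ (p - 1) • powerMap p v := by
  rw [powerMap, powerMap, norm_smul, Real.norm_eq_abs, abs_of_nonneg hl,
    Real.mul_rpow hl (norm_nonneg v), smul_smul, smul_smul, mul_right_comm,
    Real.rpow_sub_two_mul_self hl hp]

lemma norm_powerMap_sub_le (hp : 1 < p) (v₁ v₂ : V) :
    ‖powerMap p v₁ - powerMap p v₂‖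
      ≤ 2 ^ |p - 2| * (1 + |p - 2|) * ((‖v₁‖ + ‖v₂‖) ^ (p - 2) * ‖v₁ - v₂‖) := by
  wlog h : ‖v₂‖ ≤ ‖v₁‖ generalizing v₁ v₂
  · simpa only [norm_sub_rev, add_comm] using this v₂ v₁ (le_of_not_ge h)
  rcases (norm_nonneg v₁).eq_or_lt with hs | hs
  · rw [norm_eq_zero.1 hs.symm, norm_eq_zero.1 (le_antisymm (hs ▸ h) (norm_nonneg v₂))]
    simp [powerMap]
  set s := ‖v₁‖
  set t := ‖v₂‖
  have ht : 0 ≤ t := norm_nonneg v₂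
  have hst : s - t ≤ ‖v₁ - v₂‖ := norm_sub_norm_le v₁ v₂
  calc ‖powerMap p v₁ - powerMap p v₂‖
      ≤ |s ^ (p - 2)| * ‖v₁ - v₂‖ + |s ^ (p - 2) - t ^ (p - 2)| * t :=
        norm_smul_sub_smul_le _ _ v₁ v₂
    _ ≤ s ^ (p - 2) * ‖v₁ - v₂‖ + |p - 2| * (s ^ (p - 2) * ‖v₁ - v₂‖) := by
        rw [abs_of_nonneg (by positivity)]
        refine add_le_add le_rfl ?_
        calc _ ≤ |p - 2| * (s ^ (p - 2) * (s - t)) :=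
              Real.abs_rpow_sub_two_sub_rpow_sub_two_mul_le hp ht h hs
          _ ≤ _ := by gcongr
    _ = (1 + |p - 2|) * s ^ (p - 2) * ‖v₁ - v₂‖ := by ring
    _ ≤ (1 + |p - 2|) * (2 ^ |p - 2| * (s + t) ^ (p - 2)) * ‖v₁ - v₂‖ := by
        gcongr
        exact Real.rpow_le_two_rpow_abs_mul_rpow hs (by linarith) (by linarith) _
    _ = _ := by ring

lemma inner_powerMap_sub (hp : p ≠ 1) (v₁ v₂ : V) :
    ⟪powerMap p v₁ - powerMap p v₂, v₁ - v₂⟫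
      = (‖v₁‖ ^ (p - 1) - ‖v₂‖ ^ (p - 1)) * (‖v₁‖ - ‖v₂‖)
        + (‖v₁‖ ^ (p - 2) + ‖v₂‖ ^ (p - 2)) * (‖v₁‖ * ‖v₂‖ - ⟪v₁, v₂⟫) := by
  rw [← Real.rpow_sub_two_mul_self (norm_nonneg v₁) hp,
    ← Real.rpow_sub_two_mul_self (norm_nonneg v₂) hp, powerMap, powerMap,
    inner_sub_left, inner_sub_right, inner_sub_right, real_inner_smul_left, real_inner_smul_left,
    real_inner_smul_left, real_inner_smul_left, real_inner_self_eq_norm_sq,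
    real_inner_self_eq_norm_sq, real_inner_comm v₂ v₁]
  ring

lemma inner_powerMap_sub_ge (hp : 1 < p) (v₁ v₂ : V) :
    min 1 (p - 1) / (2 * 2 ^ |p - 2|) * ((‖v₁‖ + ‖v₂‖) ^ (p - 2) * ‖v₁ - v₂‖ ^ 2)
      ≤ ⟪powerMap p v₁ - powerMap p v₂, v₁ - v₂⟫ := by
  wlog h : ‖v₂‖ ≤ ‖v₁‖ generalizing v₁ v₂
  · have := this v₂ v₁ (le_of_not_ge h)
    rwa [norm_sub_rev, add_comm, ← inner_neg_neg, neg_sub, neg_sub] at this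
  rcases (norm_nonneg v₁).eq_or_lt with hs | hs
  · rw [norm_eq_zero.1 hs.symm, norm_eq_zero.1 (le_antisymm (hs ▸ h) (norm_nonneg v₂))]
    simp [powerMap]
  rw [inner_powerMap_sub hp.ne', norm_sub_sq_real]
  set s := ‖v₁‖
  set t := ‖v₂‖
  have ht : 0 ≤ t := norm_nonneg v₂
  set m := min 1 (p - 1)
  set c := m / (2 * 2 ^ |p - 2|)
  have hm : 0 ≤ m := le_min zero_le_one (by linarith)
  have hcS : 0 ≤ c * (s + t) ^ (p - 2) := by positivity
  -- this one comparison controls both the radial and the angular part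
  have hc : 2 * c * (s + t) ^ (p - 2) ≤ m * s ^ (p - 2) := by
    have hK : (0 : ℝ) < 2 ^ |p - 2| := by positivity
    calc 2 * c * (s + t) ^ (p - 2) = m / 2 ^ |p - 2| * (s + t) ^ (p - 2) := by
          simp only [c]; field_simp
      _ ≤ m / 2 ^ |p - 2| * (2 ^ |p - 2| * s ^ (p - 2)) := by
          gcongr
          exact Real.rpow_le_two_rpow_abs_mul_rpow (by linarith) (by linarith) (by linarith) _
      _ = m * s ^ (p - 2) := by field_simp
  have radial : c * (s + t) ^ (p - 2) * (s - t) ≤ s ^ (p - 1) - t ^ (p - 1) :=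
    calc _ ≤ m * s ^ (p - 2) * (s - t) :=
          mul_le_mul_of_nonneg_right (by linarith) (by linarith)
      _ ≤ _ := by
          rw [mul_assoc]
          exact Real.min_one_mul_rpow_sub_two_mul_sub_le hp ht h hs
  have angular : 2 * c * (s + t) ^ (p - 2) ≤ s ^ (p - 2) + t ^ (p - 2) := by
    have : m * s ^ (p - 2) ≤ s ^ (p - 2) :=
      mul_le_of_le_one_left (by positivity) (min_le_left _ _)
    linarith [Real.rpow_nonneg ht (p - 2)]
  have hw : 0 ≤ s * t - ⟪v₁, v₂⟫ := sub_nonneg.2 (real_inner_le_norm v₁ v₂)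
  nlinarith [mul_le_mul_of_nonneg_right radial (by linarith : 0 ≤ s - t),
    mul_le_mul_of_nonneg_right angular hw]

end PowerMap

theorem power_map_is_p_structure_general
    {V : Type*} [NormedAddCommGroup V] [InnerProductSpace ℝ V]
    (p : ℝ) (hp : 1 < p) :
    ∃ C c : ℝ, 0 < C ∧ 0 < c ∧
      IsPStructureMap p (fun v : V => ‖v‖ ^ (p - 2) • v) C c := by
  refine ⟨2 ^ |p - 2| * (1 + |p - 2|), min 1 (p - 1) / (2 * 2 ^ |p - 2|), by positivity,
    div_pos (lt_min one_pos (sub_pos.2 hp)) (by positivity), ?_⟩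
  refine ⟨fun l hl v => powerMap_smul hp.ne' hl v, norm_powerMap_sub_le hp, fun v₁ v₂ => ?_⟩
  rw [Real.rpow_two]
  exact inner_powerMap_sub_ge hp v₁ v₂

/-- For `1 < p < ∞`, the `p`-power map `A(v) := |v|^{p−2} v` (with
`A(0) = 0`, which is automatic with the rpow convention) satisfies the structural
(homogeneity, Lipschitz and monotonicity) conditions of a `p`-structure, with constants
depending only on `p`. -/
theorem power_map_is_p_structure
    {V : Type*} [NormedAddCommGroup V] [InnerProductSpace ℝ V] [FiniteDimensional ℝ V]
    (p : ℝ) (hp : 1 < p) :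
    ∃ C c : ℝ, 0 < C ∧ 0 < c ∧
      IsPStructureMap p (fun v : V => ‖v‖ ^ (p - 2) • v) C c :=
  power_map_is_p_structure_general p hp
end
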